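/- arXiv:2201.00851 — 3 statements merged into one kernel-verified Lean document; each statement's English description precedes it below -/
import Mathlib

section
/- Let f be an admissible evaluation function. Then for every z ∈ ℂ with Im z > 0 there exists exactly one m ∈ ℂ with Im m > 0 such that ∫₀¹ (g_f(x)·m + z)^{−1} dx = −m. -/
open MeasureTheory Complex Filter ProbabilityTheory Matrix
open scoped ENNReal NNReal ComplexOrder

noncomputable section

/-- The `k`-th Fourier coefficient of a `1`-periodic function `f : ℝ → ℂ`. -/
def fCoeff (f : ℝ → ℂ) (k : ℤ) : ℂ :=
  ∫ y in (0:ℝ)..1, f y * Complex.exp (-(2 * (Real.pi : ℂ) * Complex.I * (k : ℂ) * (y : ℂ)))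

/-- The function `g_f(x) = ∑_{n odd} |∑_{k ≥ 0} c_{n 2^k} e^{2πikx}|²`. -/
def gFun (f : ℝ → ℂ) (x : ℝ) : ℝ :=
  ∑' n : ℕ, if Odd n then
    ‖∑' k : ℕ, fCoeff f ((n : ℤ) * 2 ^ k) *
      Complex.exp (2 * (Real.pi : ℂ) * Complex.I * (k : ℂ) * (x : ℂ))‖ ^ 2
  else 0

/-- Admissible evaluation function: `1`-periodic (i.e. a function on ℝ/ℤ), `C²`,
mean zero, and `g_f` uniformly bounded below on `[0,1]`. -/
def Admissible (f : ℝ → ℂ) : Prop :=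
  Function.Periodic f 1 ∧ ContDiff ℝ 2 f ∧ (∫ y in (0:ℝ)..1, f y) = 0 ∧
    ∃ g₀ : ℝ, 0 < g₀ ∧ ∀ x ∈ Set.Icc (0:ℝ) 1, g₀ ≤ gFun f x

/-- The doubling map `T(x) = 2x mod 1`. -/
def dbl (x : ℝ) : ℝ := Int.fract (2 * x)

/-- The dynamically defined matrix `X_{ij} = N^{-1/2} f(T^{2N(i-1)+j} x)`, `1 ≤ i,j ≤ N`. -/
def Xmat (N : ℕ) (f : ℝ → ℂ) (x : ℝ) : Matrix (Fin N) (Fin N) ℂ :=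
  Matrix.of fun i j => ((Real.sqrt N : ℝ) : ℂ)⁻¹ * f (dbl^[2 * N * i.val + j.val + 1] x)

/-- The Hermitization `H_X = [[0, X], [X†, 0]]`. -/
def HX (N : ℕ) (f : ℝ → ℂ) (x : ℝ) :
    Matrix (Fin N ⊕ Fin N) (Fin N ⊕ Fin N) ℂ :=
  Matrix.fromBlocks 0 (Xmat N f x) (Xmat N f x)ᴴ 0

/-- Normalized trace of the resolvent: `card⁻¹ Tr (H - z)⁻¹`. -/
def stT {ι : Type} [Fintype ι] [DecidableEq ι] (H : Matrix ι ι ℂ) (z : ℂ) : ℂ :=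
  (Fintype.card ι : ℂ)⁻¹ * Matrix.trace (H - z • (1 : Matrix ι ι ℂ))⁻¹

/-- The uniform probability measure on `[0,1]`. -/
def unif : Measure ℝ := volume.restrict (Set.Icc 0 1)

/-- `L = ⌊(log₂ N)^6⌋`. -/
def LL (N : ℕ) : ℕ := Nat.floor ((Real.logb 2 N) ^ 6)

/-- The `n`-th binary digit of `x` (for `x ∈ [0,1)`): `d_n = ⌊2^n x⌋ mod 2`. -/
def bdigit (x : ℝ) (n : ℕ) : ℕ := (Int.floor (2 ^ n * x)).toNat % 2

/-- The resampled point `y_k = ∑_{n=1}^{L} d_{n+k} 2^{-n} + ∑_{n > L} b_n^k 2^{-n}`. -/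
def yk (N : ℕ) (x : ℝ) (b : ℕ × ℕ → Bool) (k : ℕ) : ℝ :=
  (∑ n ∈ Finset.Icc 1 (LL N), (bdigit x (n + k) : ℝ) / 2 ^ n) +
  ∑' n : ℕ, if LL N < n then (if b (n, k) then (1:ℝ) / 2 ^ n else 0) else 0

/-- The resampled matrix `Y_{ij} = N^{-1/2} f(y_{2N(i-1)+j})`. -/
def Ymat (N : ℕ) (f : ℝ → ℂ) (x : ℝ) (b : ℕ × ℕ → Bool) : Matrix (Fin N) (Fin N) ℂ :=
  Matrix.of fun i j => ((Real.sqrt N : ℝ) : ℂ)⁻¹ * f (yk N x b (2 * N * i.val + j.val + 1))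

/-- The Hermitization `H_Y = [[0, Y], [Y†, 0]]`. -/
def HY (N : ℕ) (f : ℝ → ℂ) (x : ℝ) (b : ℕ × ℕ → Bool) :
    Matrix (Fin N ⊕ Fin N) (Fin N ⊕ Fin N) ℂ :=
  Matrix.fromBlocks 0 (Ymat N f x b) (Ymat N f x b)ᴴ 0

/-- `H_Y` reindexed over `Fin (N + N)`. -/
def HY2 (N : ℕ) (f : ℝ → ℂ) (x : ℝ) (b : ℕ × ℕ → Bool) :
    Matrix (Fin (N + N)) (Fin (N + N)) ℂ :=
  Matrix.reindex finSumFinEquiv finSumFinEquiv (HY N f x b)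

/-- The fair-coin measure on `Bool`. -/
def bern : Measure Bool := (2:ℝ≥0∞)⁻¹ • Measure.dirac true + (2:ℝ≥0∞)⁻¹ • Measure.dirac false

/-- Auxiliary index type: `none` indexes the uniform point `x`, `some (n,k)` the bit `b_n^k`. -/
def mixType : Option (ℕ × ℕ) → Type
  | none => ℝ
  | some _ => Bool

def mixMS : (o : Option (ℕ × ℕ)) → MeasurableSpace (mixType o)
  | none => (inferInstance : MeasurableSpace ℝ)
  | some _ => (inferInstance : MeasurableSpace Bool)

def mixFam {Ω : Type} (X : Ω → ℝ) (B : Ω → ℕ × ℕ → Bool) :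
    (o : Option (ℕ × ℕ)) → Ω → mixType o
  | none => X
  | some p => fun ω => B ω p

/-- A probability space carrying a uniform point `X` on `[0,1]` together with an
independent array of i.i.d. fair bits `B`, all jointly independent: this realizes the
product of the uniform measure on `[0,1]` with the Bernoulli(1/2) product measure. -/
def IsResamplingSpace {Ω : Type} [MeasurableSpace Ω] (μ : Measure Ω)
    (X : Ω → ℝ) (B : Ω → ℕ × ℕ → Bool) : Prop :=
  IsProbabilityMeasure μ ∧ Measure.map X μ = unif ∧
  (∀ p : ℕ × ℕ, Measure.map (fun ω => B ω p) μ = bern) ∧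
  ProbabilityTheory.iIndepFun (m := mixMS) (mixFam X B) μ

open Classical in
/-- Eigenvalues (with multiplicity) of a Hermitian matrix, as a total function. -/
def eigs {ι : Type} [Fintype ι] [DecidableEq ι] (A : Matrix ι ι ℂ) : ι → ℝ :=
  if h : A.IsHermitian then h.eigenvalues else 0

/-- `S_O(H; E, ρ) = 𝔼[ ∑_{injective tuples} O(2Nρ(λ_{i_1}-E), …) ]` where `2N = card ι`. -/
def SO {Ω ι : Type} [MeasurableSpace Ω] [Fintype ι] [DecidableEq ι]
    (μ : Measure Ω) (H : Ω → Matrix ι ι ℂ) {k : ℕ} (O : (Fin k → ℝ) → ℝ) (E ρ : ℝ) : ℝ :=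
  ∫ ω, (∑ t : Fin k ↪ ι, O fun a => (Fintype.card ι : ℝ) * ρ * (eigs (H ω) (t a) - E)) ∂μ

/-- Index type for the independent Gaussian entries of a GUE matrix. -/
def GUEidx (n : ℕ) : Type := Fin n ⊕ ({p : Fin n × Fin n // p.1 < p.2} × Bool)

/-- The family of real random variables built from the entries of a random matrix. -/
def GUEfam {n : ℕ} {Ω : Type} (W : Ω → Matrix (Fin n) (Fin n) ℂ) : GUEidx n → Ω → ℝ
  | .inl i => fun ω => (W ω i i).re
  | .inr (p, true) => fun ω => (W ω p.1.1 p.1.2).re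
  | .inr (p, false) => fun ω => (W ω p.1.1 p.1.2).im

/-- `W` is a normalized `n × n` GUE matrix (`n = 2N`): Hermitian, the entries on and above
the diagonal are independent centered Gaussians, diagonal entries real with variance `1/n`,
and the real and imaginary parts of the above-diagonal entries each of variance `1/(2n)`. -/
def IsGUE (n : ℕ) {Ω : Type} [MeasurableSpace Ω] (μ : Measure Ω)
    (W : Ω → Matrix (Fin n) (Fin n) ℂ) : Prop :=
  (∀ ω, (W ω).IsHermitian) ∧
  (∀ i j, Measurable fun ω => W ω i j) ∧
  ProbabilityTheory.iIndepFun (m := fun _ : GUEidx n => (inferInstance : MeasurableSpace ℝ))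
    (GUEfam W) μ ∧
  (∀ i : Fin n, Measure.map (fun ω => (W ω i i).re) μ =
    ProbabilityTheory.gaussianReal 0 ((n : ℝ≥0))⁻¹) ∧
  (∀ p : {p : Fin n × Fin n // p.1 < p.2},
    Measure.map (fun ω => (W ω p.1.1 p.1.2).re) μ =
      ProbabilityTheory.gaussianReal 0 ((2 * n : ℝ≥0))⁻¹ ∧
    Measure.map (fun ω => (W ω p.1.1 p.1.2).im) μ =
      ProbabilityTheory.gaussianReal 0 ((2 * n : ℝ≥0))⁻¹)

/-- The semicircle density `ρ_sc(E) = (2π)⁻¹ √((4 - E²)₊)`. -/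
def rhoSC (E : ℝ) : ℝ := (2 * Real.pi)⁻¹ * Real.sqrt (4 - E ^ 2)

open Classical in
/-- `H^{(U)}`: the matrix `H` with all rows and columns indexed by `U` replaced by `0`. -/
def minorMat {n : ℕ} (H : Matrix (Fin n) (Fin n) ℂ) (U : Finset (Fin n)) :
    Matrix (Fin n) (Fin n) ℂ :=
  Matrix.of fun i j => if i ∈ U ∨ j ∈ U then 0 else H i j

/-- `A|_{S,T}`: the submatrix with rows in `S` and columns in `T`. -/
def subM {n : ℕ} (A : Matrix (Fin n) (Fin n) ℂ) (S T : Finset (Fin n)) :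
    Matrix S T ℂ :=
  A.submatrix (fun a : S => (a : Fin n)) (fun a : T => (a : Fin n))

/-- The operator norm of a matrix, induced by the Euclidean norm. -/
def opNorm {ι : Type} [Fintype ι] [DecidableEq ι] (A : Matrix ι ι ℂ) : ℝ :=
  ‖Matrix.toEuclideanCLM (𝕜 := ℂ) A‖

/-- `φ(j) = ∑_{k ≥ 1} conj(c_k) c_{k 2^j}` for `j ≥ 0`. -/
def phiP (f : ℝ → ℂ) (j : ℕ) : ℂ :=
  ∑' k : ℕ, (starRingEnd ℂ) (fCoeff f ((k : ℤ) + 1)) * fCoeff f (((k : ℤ) + 1) * 2 ^ j)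

/-- `φ(j)` for `j ∈ ℤ`, with `φ(-j) = conj φ(j)`. -/
def phiZ (f : ℝ → ℂ) (j : ℤ) : ℂ :=
  if 0 ≤ j then phiP f j.toNat else (starRingEnd ℂ) (phiP f (-j).toNat)

open Classical in
/-- The banded Toeplitz correlation matrix `Φ^N`. -/
def PhiN (f : ℝ → ℂ) (N : ℕ) : Matrix (Fin N) (Fin N) ℂ :=
  Matrix.of fun i j =>
    if ((|(i : ℤ) - (j : ℤ)| : ℤ) : ℝ) ≤ (Real.logb 2 N) ^ 6 then phiZ f ((i : ℤ) - (j : ℤ))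
    else 0

/-- The stochastic control parameter `Γ = max(1, max_{a,b} |G_{ab}|)`. -/
def GammaP {ι : Type} [Fintype ι] (G : Matrix ι ι ℂ) : ℝ :=
  max 1 (sSup {r : ℝ | ∃ a b, r = ‖G a b‖})

open Classical in
/-- The stochastic control parameter `γ`: the largest operator norm of `(G^{(J)}|_{I,I})⁻¹`
over windows `I, J` of radius `W` around an index `i`. -/
def gammaP {n : ℕ} (W : ℝ) (H : Matrix (Fin n) (Fin n) ℂ) (z : ℂ) : ℝ :=
  max 1 (sSup {r : ℝ | ∃ (i : Fin n) (I J : Finset (Fin n)), Disjoint I J ∧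
    (∀ a ∈ I, |(a.val : ℝ) - (i.val : ℝ)| ≤ W) ∧
    (∀ a ∈ J, |(a.val : ℝ) - (i.val : ℝ)| ≤ W) ∧
    r = opNorm ((subM ((minorMat H J - z • 1)⁻¹) I I)⁻¹)})

/-- Max of the absolute values of the entries of a matrix. -/
def entMax {n : ℕ} (A : Matrix (Fin n) (Fin n) ℂ) : ℝ :=
  ⨆ i, ⨆ j, ‖A i j‖

end

/-!
For `g ≥ 0` bounded by `G`, the map `F m = -∫ (g m + z)⁻¹` preserves the upper half-plane, and
`Im F m = ∫ (g Im m + Im z) / |g m + z|²`. Comparing this with the Cauchy–Schwarz bound for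
`F m₁ - F m₂ = (m₁ - m₂) ∫ g (g m₁ + z)⁻¹ (g m₂ + z)⁻¹` shows that `F` contracts
`‖m₁ - m₂‖ / √(Im m₁ Im m₂)` (which is `2 sinh (d / 2)` for the hyperbolic distance `d`) by the
factor `G / (G + (Im z)²) < 1`. On a closed region of the upper half-plane that `F` maps into
itself and that contains every solution, this quantity is comparable to the Euclidean distance,
so an iterate of `F` is a Banach contraction there. For `g = g_f`, continuity and boundedness
follow from the `O(k⁻²)` decay of the Fourier coefficients of a periodic `C²` function.
-/

open Set Function in
theorem existsUnique_fixedPt_of_contracting_comparable {α : Type*} [MetricSpace α]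
    [CompleteSpace α] {F : α → α} {s : Set α} (hs : IsClosed s) (hne : s.Nonempty)
    (hF : MapsTo F s s) {ρ : α → α → ℝ} {c C θ : ℝ} (hc : 0 < c) (hθ0 : 0 ≤ θ) (hθ1 : θ < 1)
    (hρc : ∀ x ∈ s, ∀ y ∈ s, c * dist x y ≤ ρ x y)
    (hρC : ∀ x ∈ s, ∀ y ∈ s, ρ x y ≤ C * dist x y)
    (hρF : ∀ x ∈ s, ∀ y ∈ s, ρ (F x) (F y) ≤ θ * ρ x y) :
    ∃! x, x ∈ s ∧ F x = x := by
  have hiter : ∀ k, ∀ x ∈ s, ∀ y ∈ s, ρ (F^[k] x) (F^[k] y) ≤ θ ^ k * ρ x y := by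
    intro k
    induction k with
    | zero => simp
    | succ k ih =>
      intro x hx y hy
      rw [iterate_succ_apply, iterate_succ_apply, pow_succ, mul_assoc]
      exact (ih _ (hF hx) _ (hF hy)).trans
        (mul_le_mul_of_nonneg_left (hρF x hx y hy) (pow_nonneg hθ0 k))
  obtain ⟨k, hk⟩ : ∃ k, θ ^ k * C < c := by
    have := (tendsto_pow_atTop_nhds_zero_of_lt_one hθ0 hθ1).mul_const C
    rw [zero_mul] at this
    exact (this.eventually (gt_mem_nhds hc)).exists
  have : CompleteSpace s := hs.completeSpace_coe
  have : Nonempty s := hne.to_subtype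
  have hcontr : ContractingWith (θ ^ k * C / c).toNNReal (hF.restrict F s s)^[k] := by
    refine ⟨by rwa [Real.toNNReal_lt_one, div_lt_one hc], LipschitzWith.of_dist_le_mul ?_⟩
    intro x y
    rw [Subtype.dist_eq, hF.coe_iterate_restrict, hF.coe_iterate_restrict]
    calc dist (F^[k] x) (F^[k] y) ≤ ρ (F^[k] x) (F^[k] y) / c := by
          rw [le_div_iff₀' hc]; exact hρc _ (hF.iterate k x.2) _ (hF.iterate k y.2)
      _ ≤ θ ^ k * (C * dist x y) / c := by
          gcongr
          exact (hiter k x x.2 y y.2).trans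
            (mul_le_mul_of_nonneg_left (hρC x x.2 y y.2) (pow_nonneg hθ0 k))
      _ = θ ^ k * C / c * dist x y := by ring
      _ ≤ _ := by gcongr; exact Real.le_coe_toNNReal _
  have huniq : ∀ x ∈ s, ∀ y ∈ s, F x = x → F y = y → x = y := by
    intro x hx y hy hFx hFy
    have h := hρF x hx y hy
    rw [hFx, hFy] at h
    have hρ : ρ x y ≤ 0 := by
      by_contra! hpos
      nlinarith [mul_pos (sub_pos.2 hθ1) hpos]
    have := hρc x hx y hy
    exact dist_le_zero.mp (by nlinarith)
  have hfix := hcontr.isFixedPt_fixedPoint_iterate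
  set x := hcontr.fixedPoint _
  exact ⟨x, ⟨x.2, congrArg Subtype.val hfix⟩,
    fun y hy => huniq y hy.1 x x.2 hy.2 (congrArg Subtype.val hfix)⟩

section SelfConsistentEquation

variable {α : Type*} [MeasurableSpace α] {μ : Measure α}

theorem integral_mul_le_sqrt_mul_sqrt {f₁ f₂ : α → ℝ} (h₁ : 0 ≤ᵐ[μ] f₁) (h₂ : 0 ≤ᵐ[μ] f₂)
    (hf₁ : MemLp f₁ 2 μ) (hf₂ : MemLp f₂ 2 μ) :
    ∫ x, f₁ x * f₂ x ∂μ ≤ √(∫ x, f₁ x ^ 2 ∂μ) * √(∫ x, f₂ x ^ 2 ∂μ) := by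
  have := integral_mul_le_Lp_mul_Lq_of_nonneg Real.HolderConjugate.two_two h₁ h₂
    (by simpa using hf₁) (by simpa using hf₂)
  simpa only [Real.rpow_two, Real.sqrt_eq_rpow, one_div] using this

variable {g : α → ℝ} {G : ℝ} {z m m₁ m₂ : ℂ}

noncomputable def selfConsistentMap (μ : Measure α) (g : α → ℝ) (z m : ℂ) : ℂ :=
  -∫ x, ((g x : ℂ) * m + z)⁻¹ ∂μ

theorem im_le_norm_ofReal_mul_add {t : ℝ} (ht : 0 ≤ t) (hm : 0 ≤ m.im) :
    z.im ≤ ‖(t : ℂ) * m + z‖ :=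
  calc z.im ≤ t * m.im + z.im := le_add_of_nonneg_left (mul_nonneg ht hm)
    _ = ((t : ℂ) * m + z).im := by simp
    _ ≤ _ := Complex.im_le_norm _

theorem normSq_ofReal_mul_add_pos {t : ℝ} (ht : 0 ≤ t) (hm : 0 ≤ m.im) (hz : 0 < z.im) :
    0 < Complex.normSq ((t : ℂ) * m + z) := by
  rw [← Complex.sq_norm]
  exact pow_pos (hz.trans_le (im_le_norm_ofReal_mul_add ht hm)) 2

theorem norm_inv_ofReal_mul_add_le {t : ℝ} (ht : 0 ≤ t) (hm : 0 ≤ m.im) (hz : 0 < z.im) :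
    ‖((t : ℂ) * m + z)⁻¹‖ ≤ z.im⁻¹ := by
  rw [norm_inv]
  exact inv_anti₀ hz (im_le_norm_ofReal_mul_add ht hm)

theorem neg_im_inv_ofReal_mul_add (t : ℝ) (m z : ℂ) :
    -((t : ℂ) * m + z)⁻¹.im = (t * m.im + z.im) / Complex.normSq ((t : ℂ) * m + z) := by
  rw [Complex.inv_im, neg_div, neg_neg]
  simp

section FiniteMeasure

variable [IsFiniteMeasure μ]

theorem integrable_inv_ofReal_mul_add (hg : Measurable g) (hg0 : ∀ x, 0 ≤ g x)
    (hm : 0 ≤ m.im) (hz : 0 < z.im) :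
    Integrable (fun x => ((g x : ℂ) * m + z)⁻¹) μ :=
  Integrable.of_bound (by fun_prop) _
    (ae_of_all _ fun x => norm_inv_ofReal_mul_add_le (hg0 x) hm hz)

theorem integrable_im_div_normSq_ofReal_mul_add (hg : Measurable g) (hg0 : ∀ x, 0 ≤ g x)
    (hm : 0 ≤ m.im) (hz : 0 < z.im) :
    Integrable (fun x => (g x * m.im + z.im) / Complex.normSq ((g x : ℂ) * m + z)) μ :=
  (integrable_inv_ofReal_mul_add hg hg0 hm hz).im.neg.congr
    (ae_of_all _ fun _ => neg_im_inv_ofReal_mul_add _ _ _)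

theorem integrable_div_normSq_ofReal_mul_add (hg : Measurable g) (hg0 : ∀ x, 0 ≤ g x)
    (hgG : ∀ x, g x ≤ G) (hm : 0 ≤ m.im) (hz : 0 < z.im) :
    Integrable (fun x => g x / Complex.normSq ((g x : ℂ) * m + z)) μ := by
  refine Integrable.of_bound
    (hg.div (Complex.continuous_normSq.measurable.comp (by fun_prop))).aestronglyMeasurable
    (G / z.im ^ 2) (ae_of_all _ fun x => ?_)
  rw [norm_div, Real.norm_of_nonneg (hg0 x), Real.norm_of_nonneg (Complex.normSq_nonneg _),
    ← Complex.sq_norm]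
  gcongr
  · exact (hg0 x).trans (hgG x)
  · exact hgG x
  · exact im_le_norm_ofReal_mul_add (hg0 x) hm

end FiniteMeasure

variable [IsProbabilityMeasure μ]

theorem norm_selfConsistentMap_le (hg0 : ∀ x, 0 ≤ g x) (hm : 0 ≤ m.im) (hz : 0 < z.im) :
    ‖selfConsistentMap μ g z m‖ ≤ z.im⁻¹ := by
  rw [selfConsistentMap, norm_neg]
  simpa using norm_integral_le_of_norm_le_const (μ := μ)
    (ae_of_all _ fun x => norm_inv_ofReal_mul_add_le (hg0 x) hm hz)

theorem im_selfConsistentMap (hg : Measurable g) (hg0 : ∀ x, 0 ≤ g x) (hm : 0 ≤ m.im)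
    (hz : 0 < z.im) : (selfConsistentMap μ g z m).im =
      ∫ x, (g x * m.im + z.im) / Complex.normSq ((g x : ℂ) * m + z) ∂μ := by
  have h := integral_im (integrable_inv_ofReal_mul_add (μ := μ) hg hg0 hm hz)
  simp only [RCLike.im_to_complex] at h
  rw [selfConsistentMap, Complex.neg_im, ← h, ← integral_neg]
  simp only [neg_im_inv_ofReal_mul_add]

noncomputable def imLowerBound (G : ℝ) (z : ℂ) : ℝ := z.im / (G / z.im + ‖z‖) ^ 2

theorem imLowerBound_pos (hG : 0 ≤ G) (hz : 0 < z.im) : 0 < imLowerBound G z :=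
  div_pos hz (pow_pos (hz.trans_le (le_add_of_nonneg_of_le (div_nonneg hG hz.le)
    (Complex.im_le_norm z))) 2)

theorem imLowerBound_le_inv (hG : 0 ≤ G) (hz : 0 < z.im) : imLowerBound G z ≤ z.im⁻¹ :=
  calc imLowerBound G z ≤ z.im / z.im ^ 2 := div_le_div_of_nonneg_left hz.le (pow_pos hz 2)
        (pow_le_pow_left₀ hz.le (le_add_of_nonneg_of_le (div_nonneg hG hz.le)
          (Complex.im_le_norm z)) 2)
    _ = z.im⁻¹ := by field_simp

theorem im_selfConsistentMap_ge (hg : Measurable g) (hg0 : ∀ x, 0 ≤ g x)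
    (hgG : ∀ x, g x ≤ G) (hm : 0 ≤ m.im) (hmz : ‖m‖ ≤ z.im⁻¹) (hz : 0 < z.im) :
    imLowerBound G z ≤ (selfConsistentMap μ g z m).im := by
  rw [im_selfConsistentMap hg hg0 hm hz, imLowerBound]
  calc z.im / (G / z.im + ‖z‖) ^ 2 = ∫ _, z.im / (G / z.im + ‖z‖) ^ 2 ∂μ := by simp
    _ ≤ _ := integral_mono (integrable_const _)
      (integrable_im_div_normSq_ofReal_mul_add hg hg0 hm hz) fun x => ?_
  have hnorm : ‖(g x : ℂ) * m + z‖ ≤ G / z.im + ‖z‖ :=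
    calc ‖(g x : ℂ) * m + z‖ ≤ g x * ‖m‖ + ‖z‖ := by
          simpa [abs_of_nonneg (hg0 x)] using norm_add_le ((g x : ℂ) * m) z
      _ ≤ G / z.im + ‖z‖ := by
          rw [div_eq_mul_inv]
          gcongr
          · exact (hg0 x).trans (hgG x)
          · exact hgG x
  refine div_le_div₀ (by have := hg0 x; positivity)
    (le_add_of_nonneg_left (mul_nonneg (hg0 x) hm)) (normSq_ofReal_mul_add_pos (hg0 x) hm hz) ?_
  rw [← Complex.sq_norm]
  gcongr

theorem im_mul_integral_div_normSq_le (hg : Measurable g) (hg0 : ∀ x, 0 ≤ g x)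
    (hgG : ∀ x, g x ≤ G) (hm : 0 ≤ m.im) (hmz : m.im ≤ z.im⁻¹) (hz : 0 < z.im) :
    m.im * ∫ x, g x / Complex.normSq ((g x : ℂ) * m + z) ∂μ ≤
      G / (G + z.im ^ 2) * (selfConsistentMap μ g z m).im := by
  have hG : 0 ≤ G := (hg0 _).trans (hgG (nonempty_of_isProbabilityMeasure μ).some)
  have hmz' : m.im * z.im ≤ 1 := by rwa [← le_inv_mul_iff₀' hz, mul_one]
  rw [im_selfConsistentMap hg hg0 hm hz, ← integral_const_mul, ← integral_const_mul]
  refine integral_mono ((integrable_div_normSq_ofReal_mul_add hg hg0 hgG hm hz).const_mul _)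
    ((integrable_im_div_normSq_ofReal_mul_add hg hg0 hm hz).const_mul _) fun x => ?_
  rw [mul_div_assoc', mul_div_assoc']
  refine div_le_div_of_nonneg_right ?_ (Complex.normSq_nonneg _)
  rw [div_mul_eq_mul_div, le_div_iff₀ (by positivity)]
  nlinarith [mul_le_mul_of_nonneg_right hmz' (mul_nonneg (hg0 x) hz.le),
    mul_le_mul_of_nonneg_right (hgG x) hz.le]

theorem selfConsistentMap_sub (hg : Measurable g) (hg0 : ∀ x, 0 ≤ g x) (hm₁ : 0 ≤ m₁.im)
    (hm₂ : 0 ≤ m₂.im) (hz : 0 < z.im) :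
    selfConsistentMap μ g z m₁ - selfConsistentMap μ g z m₂ = (m₁ - m₂) *
      ∫ x, (g x : ℂ) * (((g x : ℂ) * m₁ + z)⁻¹ * ((g x : ℂ) * m₂ + z)⁻¹) ∂μ := by
  rw [selfConsistentMap, selfConsistentMap, neg_sub_neg, ← integral_sub
    (integrable_inv_ofReal_mul_add hg hg0 hm₂ hz) (integrable_inv_ofReal_mul_add hg hg0 hm₁ hz),
    ← integral_const_mul]
  congr 1
  funext x
  have h₁ := (normSq_ofReal_mul_add_pos (hg0 x) hm₁ hz).ne'
  have h₂ := (normSq_ofReal_mul_add_pos (hg0 x) hm₂ hz).ne'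
  rw [Ne, Complex.normSq_eq_zero] at h₁ h₂
  field_simp
  ring

theorem norm_integral_mul_inv_mul_inv_le (hg : Measurable g) (hg0 : ∀ x, 0 ≤ g x)
    (hgG : ∀ x, g x ≤ G) (hm₁ : 0 ≤ m₁.im) (hm₂ : 0 ≤ m₂.im) (hz : 0 < z.im) :
    ‖∫ x, (g x : ℂ) * (((g x : ℂ) * m₁ + z)⁻¹ * ((g x : ℂ) * m₂ + z)⁻¹) ∂μ‖ ≤
      √(∫ x, g x / Complex.normSq ((g x : ℂ) * m₁ + z) ∂μ) *
        √(∫ x, g x / Complex.normSq ((g x : ℂ) * m₂ + z) ∂μ) := by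
  set u : ℂ → α → ℝ := fun m x => √(g x) / ‖(g x : ℂ) * m + z‖
  have hu_memLp {m : ℂ} (hm : 0 ≤ m.im) : MemLp (u m) 2 μ := by
    refine MemLp.of_bound (by fun_prop) (√G / z.im) (ae_of_all _ fun x => ?_)
    rw [Real.norm_of_nonneg (by positivity)]
    exact div_le_div₀ (Real.sqrt_nonneg _) (Real.sqrt_le_sqrt (hgG x)) hz
      (im_le_norm_ofReal_mul_add (hg0 x) hm)
  have hu_sq (m : ℂ) (x : α) : u m x ^ 2 = g x / Complex.normSq ((g x : ℂ) * m + z) := by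
    rw [div_pow, Real.sq_sqrt (hg0 x), Complex.sq_norm]
  calc _ ≤ ∫ x, ‖(g x : ℂ) * (((g x : ℂ) * m₁ + z)⁻¹ * ((g x : ℂ) * m₂ + z)⁻¹)‖ ∂μ :=
        norm_integral_le_integral_norm _
    _ = ∫ x, u m₁ x * u m₂ x ∂μ := by
        congr 1
        funext x
        rw [div_mul_div_comm, Real.mul_self_sqrt (hg0 x)]
        simp only [norm_mul, norm_inv, Complex.norm_real, Real.norm_of_nonneg (hg0 x)]
        ring
    _ ≤ _ := by
        simpa only [hu_sq] using integral_mul_le_sqrt_mul_sqrt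
          (ae_of_all _ fun x => by positivity) (ae_of_all _ fun x => by positivity)
          (hu_memLp hm₁) (hu_memLp hm₂)

theorem selfConsistentMap_contracts (hg : Measurable g) (hg0 : ∀ x, 0 ≤ g x)
    (hgG : ∀ x, g x ≤ G) (hz : 0 < z.im) (hm₁ : 0 < m₁.im) (hm₁z : ‖m₁‖ ≤ z.im⁻¹)
    (hm₂ : 0 < m₂.im) (hm₂z : ‖m₂‖ ≤ z.im⁻¹) :
    ‖selfConsistentMap μ g z m₁ - selfConsistentMap μ g z m₂‖ /
        √((selfConsistentMap μ g z m₁).im * (selfConsistentMap μ g z m₂).im) ≤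
      G / (G + z.im ^ 2) * (‖m₁ - m₂‖ / √(m₁.im * m₂.im)) := by
  have hG : 0 ≤ G := (hg0 _).trans (hgG (nonempty_of_isProbabilityMeasure μ).some)
  set θ := G / (G + z.im ^ 2)
  have hθ : 0 ≤ θ := by positivity
  have hpos {m : ℂ} (hm : 0 < m.im) (hmz : ‖m‖ ≤ z.im⁻¹) :
      0 < (selfConsistentMap μ g z m).im :=
    (imLowerBound_pos hG hz).trans_le (im_selfConsistentMap_ge hg hg0 hgG hm.le hmz hz)
  have hsqrt {m : ℂ} (hm : 0 < m.im) (hmz : ‖m‖ ≤ z.im⁻¹) :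
      √(∫ x, g x / Complex.normSq ((g x : ℂ) * m + z) ∂μ) ≤
        √θ * √(selfConsistentMap μ g z m).im / √m.im := by
    rw [← Real.sqrt_mul hθ, ← Real.sqrt_div' _ hm.le]
    refine Real.sqrt_le_sqrt ((le_div_iff₀' hm).2 ?_)
    exact im_mul_integral_div_normSq_le hg hg0 hgG hm.le ((Complex.im_le_norm m).trans hmz) hz
  rw [div_le_iff₀ (Real.sqrt_pos.2 (mul_pos (hpos hm₁ hm₁z) (hpos hm₂ hm₂z))),
    selfConsistentMap_sub hg hg0 hm₁.le hm₂.le hz, norm_mul]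
  calc _ ≤ ‖m₁ - m₂‖ * ((√θ * √(selfConsistentMap μ g z m₁).im / √m₁.im) *
        (√θ * √(selfConsistentMap μ g z m₂).im / √m₂.im)) := by
        gcongr
        exact (norm_integral_mul_inv_mul_inv_le hg hg0 hgG hm₁.le hm₂.le hz).trans
          (mul_le_mul (hsqrt hm₁ hm₁z) (hsqrt hm₂ hm₂z) (Real.sqrt_nonneg _) (by positivity))
    _ = _ := by
        rw [Real.sqrt_mul hm₁.le, Real.sqrt_mul (hpos hm₁ hm₁z).le]
        field_simp
        rw [Real.sq_sqrt hθ]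
        ring

def selfConsistentRegion (G : ℝ) (z : ℂ) : Set ℂ :=
  {m | ‖m‖ ≤ z.im⁻¹ ∧ imLowerBound G z ≤ m.im}

theorem isClosed_selfConsistentRegion (G : ℝ) (z : ℂ) : IsClosed (selfConsistentRegion G z) :=
  (isClosed_le continuous_norm continuous_const).inter
    (isClosed_le continuous_const Complex.continuous_im)

theorem im_pos_of_mem_selfConsistentRegion (hG : 0 ≤ G) (hz : 0 < z.im)
    (hm : m ∈ selfConsistentRegion G z) : 0 < m.im :=
  (imLowerBound_pos hG hz).trans_le hm.2

theorem selfConsistentRegion_nonempty (hG : 0 ≤ G) (hz : 0 < z.im) :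
    (selfConsistentRegion G z).Nonempty :=
  ⟨imLowerBound G z * Complex.I,
    by simpa [abs_of_pos (imLowerBound_pos hG hz)] using imLowerBound_le_inv hG hz, by simp⟩

theorem dist_le_norm_div_sqrt_le_of_mem_selfConsistentRegion (hG : 0 ≤ G) (hz : 0 < z.im)
    (h₁ : m₁ ∈ selfConsistentRegion G z) (h₂ : m₂ ∈ selfConsistentRegion G z) :
    z.im * dist m₁ m₂ ≤ ‖m₁ - m₂‖ / √(m₁.im * m₂.im) ∧
      ‖m₁ - m₂‖ / √(m₁.im * m₂.im) ≤ (imLowerBound G z)⁻¹ * dist m₁ m₂ := by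
  have hη := imLowerBound_pos hG hz
  have him₁ := im_pos_of_mem_selfConsistentRegion hG hz h₁
  have him₂ := im_pos_of_mem_selfConsistentRegion hG hz h₂
  have hle₁ := (Complex.im_le_norm m₁).trans h₁.1
  have hle₂ := (Complex.im_le_norm m₂).trans h₂.1
  rw [dist_eq_norm]
  constructor
  · calc z.im * ‖m₁ - m₂‖ = ‖m₁ - m₂‖ / z.im⁻¹ := by rw [div_inv_eq_mul, mul_comm]
      _ ≤ _ := div_le_div_of_nonneg_left (norm_nonneg _) (by positivity)
          ((Real.sqrt_le_left (by positivity)).2 (by nlinarith))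
  · calc ‖m₁ - m₂‖ / √(m₁.im * m₂.im) ≤ ‖m₁ - m₂‖ / imLowerBound G z :=
          div_le_div_of_nonneg_left (norm_nonneg _) hη
            (Real.le_sqrt_of_sq_le (by nlinarith [h₁.2, h₂.2]))
      _ = _ := div_eq_inv_mul _ _

theorem selfConsistentMap_mapsTo (hg : Measurable g) (hg0 : ∀ x, 0 ≤ g x)
    (hgG : ∀ x, g x ≤ G) (hz : 0 < z.im) :
    Set.MapsTo (selfConsistentMap μ g z) (selfConsistentRegion G z) (selfConsistentRegion G z) :=
  fun m hm =>
    have him : 0 ≤ m.im := (div_nonneg hz.le (sq_nonneg _) : 0 ≤ imLowerBound G z).trans hm.2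
    ⟨norm_selfConsistentMap_le hg0 him hz, im_selfConsistentMap_ge hg hg0 hgG him hm.1 hz⟩

theorem mem_selfConsistentRegion_of_selfConsistentMap_eq (hg : Measurable g)
    (hg0 : ∀ x, 0 ≤ g x) (hgG : ∀ x, g x ≤ G) (hz : 0 < z.im) (hm : 0 ≤ m.im)
    (hF : selfConsistentMap μ g z m = m) : m ∈ selfConsistentRegion G z := by
  have hnorm : ‖m‖ ≤ z.im⁻¹ := hF ▸ norm_selfConsistentMap_le (μ := μ) hg0 hm hz
  exact ⟨hnorm, hF ▸ im_selfConsistentMap_ge hg hg0 hgG hm hnorm hz⟩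

theorem existsUnique_integral_inv_ofReal_mul_add_eq_neg (hg : Measurable g)
    (hg0 : ∀ x, 0 ≤ g x) (hgG : ∀ x, g x ≤ G) (hz : 0 < z.im) :
    ∃! m : ℂ, 0 < m.im ∧ ∫ x, ((g x : ℂ) * m + z)⁻¹ ∂μ = -m := by
  have hG : 0 ≤ G := (hg0 _).trans (hgG (nonempty_of_isProbabilityMeasure μ).some)
  have hfix_iff (m : ℂ) :
      selfConsistentMap μ g z m = m ↔ ∫ x, ((g x : ℂ) * m + z)⁻¹ ∂μ = -m :=
    neg_eq_iff_eq_neg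
  have him (m : ℂ) (hm : m ∈ selfConsistentRegion G z) : 0 < m.im :=
    im_pos_of_mem_selfConsistentRegion hG hz hm
  obtain ⟨m, ⟨hm, hmF⟩, huniq⟩ := existsUnique_fixedPt_of_contracting_comparable
    (isClosed_selfConsistentRegion G z) (selfConsistentRegion_nonempty hG hz)
    (selfConsistentMap_mapsTo (μ := μ) hg hg0 hgG hz)
    (ρ := fun m₁ m₂ => ‖m₁ - m₂‖ / √(m₁.im * m₂.im)) hz (by positivity)
    ((div_lt_one (by positivity)).2 (by linarith [pow_pos hz 2]))
    (fun m₁ h₁ m₂ h₂ => (dist_le_norm_div_sqrt_le_of_mem_selfConsistentRegion hG hz h₁ h₂).1)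
    (fun m₁ h₁ m₂ h₂ => (dist_le_norm_div_sqrt_le_of_mem_selfConsistentRegion hG hz h₁ h₂).2)
    (fun m₁ h₁ m₂ h₂ => selfConsistentMap_contracts hg hg0 hgG hz (him m₁ h₁) h₁.1
      (him m₂ h₂) h₂.1)
  refine ⟨m, ⟨him m hm, (hfix_iff m).1 hmF⟩, fun m' ⟨hm', hm'F⟩ => huniq m' ?_⟩
  have hF := (hfix_iff m').2 hm'F
  exact ⟨mem_selfConsistentRegion_of_selfConsistentMap_eq hg hg0 hgG hz hm'.le hF, hF⟩

end SelfConsistentEquation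

section FourierCoefficients

open Real Set Function

variable {f : ℝ → ℂ}

theorem fCoeff_eq_fourierCoeffOn (f : ℝ → ℂ) (k : ℤ) :
    fCoeff f k = fourierCoeffOn zero_lt_one f k := by
  rw [fourierCoeffOn_eq_integral, fCoeff]
  simp only [fourier_coe_apply, smul_eq_mul]
  push_cast
  simp only [sub_zero, div_one, one_smul]
  congr 1
  funext y
  rw [mul_comm]
  congr 2
  ring

theorem fCoeff_eq_fCoeff_deriv_div {f' : ℝ → ℂ} (hper : Periodic f 1)
    (hf : ∀ x, HasDerivAt f (f' x) x) (hf' : Continuous f') {k : ℤ} (hk : k ≠ 0) :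
    fCoeff f k = fCoeff f' k / (2 * π * Complex.I * k) := by
  rw [fCoeff_eq_fourierCoeffOn, fCoeff_eq_fourierCoeffOn,
    fourierCoeffOn_of_hasDerivAt zero_lt_one hk (fun x _ => hf x) (hf'.intervalIntegrable 0 1),
    show f 1 = f 0 by simpa using hper 0]
  push_cast
  field_simp
  ring

theorem norm_fCoeff_le {M : ℝ} (hM : ∀ y ∈ Icc (0 : ℝ) 1, ‖f y‖ ≤ M) (k : ℤ) :
    ‖fCoeff f k‖ ≤ M := by
  simpa [fCoeff] using intervalIntegral.norm_integral_le_of_norm_le_const (a := 0) (b := 1)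
    (f := fun y => f y * Complex.exp (-(2 * (π : ℂ) * Complex.I * k * y))) fun y hy => by
      rw [norm_mul, Complex.norm_exp]
      simpa using hM y (Ioc_subset_Icc_self (by simpa using hy))

theorem Function.Periodic.deriv {c : ℝ} (hf : Periodic f c) : Periodic (deriv f) c :=
  fun x => by simpa [hf.funext] using (deriv_comp_add_const f c x).symm

theorem norm_fCoeff_le_of_contDiff_two (hper : Periodic f 1) (hf : ContDiff ℝ 2 f) :
    ∃ C, ∀ k : ℤ, k ≠ 0 → ‖fCoeff f k‖ ≤ C / (k : ℝ) ^ 2 := by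
  have hf' : ContDiff ℝ 1 (deriv f) := (contDiff_succ_iff_deriv (n := 1).mp hf).2.2
  obtain ⟨M, hM⟩ := (isCompact_Icc (a := (0 : ℝ)) (b := 1)).exists_bound_of_continuousOn
    (hf'.continuous_deriv le_rfl).continuousOn
  refine ⟨M / (2 * π) ^ 2, fun k hk => ?_⟩
  rw [fCoeff_eq_fCoeff_deriv_div hper (fun x => (hf.differentiable (by norm_num) x).hasDerivAt)
      hf'.continuous hk,
    fCoeff_eq_fCoeff_deriv_div hper.deriv (fun x => (hf'.differentiable one_ne_zero x).hasDerivAt)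
      (hf'.continuous_deriv le_rfl) hk,
    div_div, norm_div]
  have hnorm : ‖2 * π * Complex.I * k * (2 * π * Complex.I * k)‖ = (2 * π) ^ 2 * (k : ℝ) ^ 2 := by
    simp only [norm_mul, Complex.norm_ofNat, Complex.norm_real, Complex.norm_I,
      Complex.norm_intCast, Real.norm_of_nonneg pi_pos.le]
    rw [← sq_abs (k : ℝ)]
    ring
  rw [hnorm, div_div]
  exact div_le_div_of_nonneg_right (norm_fCoeff_le hM k) (by positivity)

theorem exists_tsum_norm_fCoeff_mul_two_pow_le (hper : Periodic f 1) (hf : ContDiff ℝ 2 f) :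
    ∃ C, ∀ n : ℕ, n ≠ 0 → Summable (fun k : ℕ => ‖fCoeff f (n * 2 ^ k)‖) ∧
      ∑' k : ℕ, ‖fCoeff f (n * 2 ^ k)‖ ≤ C / (n : ℝ) ^ 2 := by
  obtain ⟨C, hC⟩ := norm_fCoeff_le_of_contDiff_two hper hf
  refine ⟨4 / 3 * C, fun n hn => ?_⟩
  have hgeom : Summable fun k : ℕ => C / (n : ℝ) ^ 2 * (1 / 4) ^ k :=
    (summable_geometric_of_lt_one (by norm_num) (by norm_num)).mul_left _
  have hle (k : ℕ) : ‖fCoeff f (n * 2 ^ k)‖ ≤ C / (n : ℝ) ^ 2 * (1 / 4) ^ k := by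
    refine (hC _ (by positivity)).trans_eq ?_
    push_cast
    rw [mul_pow, ← pow_mul, pow_mul', _root_.one_div_pow]
    norm_num
    ring
  have hsum := hgeom.of_nonneg_of_le (fun k => norm_nonneg _) hle
  refine ⟨hsum, (hsum.tsum_le_tsum hle hgeom).trans_eq ?_⟩
  rw [tsum_mul_left, tsum_geometric_of_lt_one (by norm_num) (by norm_num)]
  ring

theorem continuous_tsum_mul_exp {a : ℕ → ℂ} (ha : Summable fun k => ‖a k‖) :
    Continuous fun x : ℝ => ∑' k : ℕ, a k * Complex.exp (2 * π * Complex.I * k * x) :=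
  continuous_tsum (fun k => by fun_prop) ha fun k x => by simp [Complex.norm_exp]

theorem norm_tsum_mul_exp_le {a : ℕ → ℂ} (ha : Summable fun k => ‖a k‖) (x : ℝ) :
    ‖∑' k : ℕ, a k * Complex.exp (2 * π * Complex.I * k * x)‖ ≤ ∑' k, ‖a k‖ := by
  have hnorm (k : ℕ) : ‖a k * Complex.exp (2 * π * Complex.I * k * x)‖ = ‖a k‖ := by
    simp [Complex.norm_exp]
  simpa only [hnorm] using norm_tsum_le_tsum_norm (ha.congr fun k => (hnorm k).symm)

noncomputable def gFunTerm (f : ℝ → ℂ) (n : ℕ) (x : ℝ) : ℝ :=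
  if Odd n then
    ‖∑' k : ℕ, fCoeff f ((n : ℤ) * 2 ^ k) * Complex.exp (2 * π * Complex.I * k * x)‖ ^ 2
  else 0

theorem gFun_eq_tsum_gFunTerm (f : ℝ → ℂ) : gFun f = fun x => ∑' n, gFunTerm f n x := rfl

theorem gFunTerm_nonneg (f : ℝ → ℂ) (n : ℕ) (x : ℝ) : 0 ≤ gFunTerm f n x := by
  unfold gFunTerm
  split <;> positivity

theorem exists_summable_bound_gFunTerm (hper : Periodic f 1) (hf : ContDiff ℝ 2 f) :
    ∃ u : ℕ → ℝ, Summable u ∧ ∀ n, Continuous (gFunTerm f n) ∧ ∀ x, gFunTerm f n x ≤ u n := by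
  obtain ⟨C, hC⟩ := exists_tsum_norm_fCoeff_mul_two_pow_le hper hf
  refine ⟨fun n => C ^ 2 * (1 / (n : ℝ) ^ 4),
    (Real.summable_one_div_nat_pow.2 (by norm_num)).mul_left _, fun n => ?_⟩
  unfold gFunTerm
  split_ifs with hn
  · obtain ⟨hsum, hle⟩ := hC n (by rintro rfl; simp at hn)
    refine ⟨(continuous_tsum_mul_exp hsum).norm.pow 2, fun x => ?_⟩
    calc _ ≤ (C / (n : ℝ) ^ 2) ^ 2 := by
          gcongr
          exact (norm_tsum_mul_exp_le hsum x).trans hle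
      _ = C ^ 2 * (1 / (n : ℝ) ^ 4) := by ring
  · exact ⟨continuous_const, fun x => by positivity⟩

theorem continuous_gFun (hper : Periodic f 1) (hf : ContDiff ℝ 2 f) : Continuous (gFun f) := by
  obtain ⟨u, hu, hbound⟩ := exists_summable_bound_gFunTerm hper hf
  rw [gFun_eq_tsum_gFunTerm]
  exact continuous_tsum (fun n => (hbound n).1) hu fun n x => by
    rw [Real.norm_of_nonneg (gFunTerm_nonneg f n x)]
    exact (hbound n).2 x

theorem exists_gFun_le (hper : Periodic f 1) (hf : ContDiff ℝ 2 f) : ∃ G, ∀ x, gFun f x ≤ G := by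
  obtain ⟨u, hu, hbound⟩ := exists_summable_bound_gFunTerm hper hf
  refine ⟨∑' n, u n, fun x => ?_⟩
  have hle (n : ℕ) : gFunTerm f n x ≤ u n := (hbound n).2 x
  exact (hu.of_nonneg_of_le (gFunTerm_nonneg f · x) hle).tsum_le_tsum hle hu

theorem gFun_nonneg (f : ℝ → ℂ) (x : ℝ) : 0 ≤ gFun f x :=
  tsum_nonneg (gFunTerm_nonneg f · x)

end FourierCoefficients

theorem stmt_0 (f : ℝ → ℂ) (hf : Admissible f) (z : ℂ) (hz : 0 < z.im) :
    ∃! m : ℂ, 0 < m.im ∧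
      (∫ x in (0:ℝ)..1, (((gFun f x : ℝ) : ℂ) * m + z)⁻¹) = -m := by
  obtain ⟨hper, hC2, -, -⟩ := hf
  obtain ⟨G, hG⟩ := exists_gFun_le hper hC2
  have : IsProbabilityMeasure (volume.restrict (Set.Ioc (0 : ℝ) 1)) := ⟨by simp⟩
  simp_rw [intervalIntegral.integral_of_le zero_le_one]
  exact existsUnique_integral_inv_ofReal_mul_add_eq_neg (continuous_gFun hper hC2).measurable
    (gFun_nonneg f) hG hz
end

section
/- Let f be an admissible evaluation function of class C⁴, k ≥ 1, O : ℝ^k → ℝ smooth and compactly supported, ε > 0, and E ∈ ℝ with ρ_∞(E) ≥ ε. Then there exist κ > 0 and C > 0 such that for all N ≥ 2: | ((2N−k)!/(2N)!) · (2N)^{k} · [ S_O(H_X; E, 1) − S_O(H_Y; E, 1) ] | ≤ C N^{−κ}. -/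
open MeasureTheory Complex Filter ProbabilityTheory Matrix
open scoped ENNReal NNReal ComplexOrder

noncomputable section Stmt8Aux
namespace Stmt8
set_option maxHeartbeats 2000000
set_option linter.unusedSectionVars false
set_option maxRecDepth 8000

variable {ι : Type} [Fintype ι] [DecidableEq ι]

def frob2 (M : Matrix ι ι ℂ) : ℝ := ∑ i, ∑ j, ‖M i j‖ ^ 2

lemma frob2_nonneg (M : Matrix ι ι ℂ) : 0 ≤ frob2 M :=
  Finset.sum_nonneg fun _ _ => Finset.sum_nonneg fun _ _ => sq_nonneg _

lemma frob2_eq_trace (M : Matrix ι ι ℂ) : frob2 M = (Matrix.trace (Mᴴ * M)).re := by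
  simp only [Matrix.trace, Matrix.diag, Matrix.mul_apply, Matrix.conjTranspose_apply,
    Complex.re_sum]
  rw [frob2, Finset.sum_comm]
  refine Finset.sum_congr rfl fun i _ => Finset.sum_congr rfl fun j _ => ?_
  rw [Complex.star_def, ← Complex.normSq_eq_conj_mul_self, Complex.ofReal_re,
    ← Complex.sq_norm]

lemma frob2_conj {U V : Matrix ι ι ℂ} (M : Matrix ι ι ℂ)
    (hU : U * star U = 1) (hV : V * star V = 1) :
    frob2 (star U * M * V) = frob2 M := by
  rw [frob2_eq_trace, frob2_eq_trace]
  congr 1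
  have h1 : (star U * M * V)ᴴ = Vᴴ * Mᴴ * U := by
    simp [Matrix.conjTranspose_mul, Matrix.star_eq_conjTranspose, Matrix.mul_assoc]
  rw [h1]
  have hUU : U * Uᴴ = 1 := by rwa [Matrix.star_eq_conjTranspose] at hU
  have hVV : V * Vᴴ = 1 := by rwa [Matrix.star_eq_conjTranspose] at hV
  rw [Matrix.star_eq_conjTranspose]
  calc (Vᴴ * Mᴴ * U * (Uᴴ * M * V)).trace
      = (Vᴴ * (Mᴴ * M) * V).trace := by
        rw [show Vᴴ * Mᴴ * U * (Uᴴ * M * V) = Vᴴ * ((Mᴴ * ((U * Uᴴ) * M)) * V) by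
          simp only [Matrix.mul_assoc], hUU, Matrix.one_mul, ← Matrix.mul_assoc]
    _ = (Mᴴ * M).trace := by
        rw [Matrix.trace_mul_comm, show V * (Vᴴ * (Mᴴ * M)) = (V * Vᴴ) * (Mᴴ * M) by
          simp only [Matrix.mul_assoc], hVV, Matrix.one_mul]

/-- Hoffman–Wielandt type pairing of eigenvalues. -/
lemma exists_perm_pairing {A B : Matrix ι ι ℂ} (hA : A.IsHermitian) (hB : B.IsHermitian) :
    ∃ σ : Equiv.Perm ι, ∀ i,
      (hA.eigenvalues i - hB.eigenvalues (σ i)) ^ 2 ≤ frob2 (A - B) := by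
  set U : Matrix ι ι ℂ := (hA.eigenvectorUnitary : Matrix ι ι ℂ) with hUdef
  set V : Matrix ι ι ℂ := (hB.eigenvectorUnitary : Matrix ι ι ℂ) with hVdef
  have hUu : U * star U = 1 := (Matrix.mem_unitaryGroup_iff).mp hA.eigenvectorUnitary.2
  have hUu' : star U * U = 1 := (Matrix.mem_unitaryGroup_iff').mp hA.eigenvectorUnitary.2
  have hVu : V * star V = 1 := (Matrix.mem_unitaryGroup_iff).mp hB.eigenvectorUnitary.2
  have hVu' : star V * V = 1 := (Matrix.mem_unitaryGroup_iff').mp hB.eigenvectorUnitary.2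
  set W : Matrix ι ι ℂ := star U * V with hWdef
  have hstarW : star W = star V * U := by
    simp [hWdef, Matrix.star_eq_conjTranspose, Matrix.conjTranspose_mul]
  have hWW : W * star W = 1 := by
    rw [hstarW, hWdef, Matrix.mul_assoc, ← Matrix.mul_assoc V _ U, hVu, Matrix.one_mul, hUu']
  have hWW' : star W * W = 1 := by
    rw [hstarW, hWdef, Matrix.mul_assoc, ← Matrix.mul_assoc U _ V, hUu, Matrix.one_mul, hVu']
  set lam := hA.eigenvalues
  set mu := hB.eigenvalues
  have key : star U * (A - B) * V =
      Matrix.diagonal (RCLike.ofReal ∘ lam) * W - W * Matrix.diagonal (RCLike.ofReal ∘ mu) := by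
    have h1 : star U * A * V = Matrix.diagonal (RCLike.ofReal ∘ lam) * W := by
      have h : star U * A * V = (star U * A * U) * (star U * V) := by
        rw [Matrix.mul_assoc (star U * A) U (star U * V), ← Matrix.mul_assoc U (star U) V, hUu,
          Matrix.one_mul]
      rw [h, ← hA.conjStarAlgAut_star_eigenvectorUnitary, Unitary.conjStarAlgAut_apply, Unitary.coe_star, star_star]
    have h2 : star U * B * V = W * Matrix.diagonal (RCLike.ofReal ∘ mu) := by
      conv_lhs => rw [hB.spectral_theorem, Unitary.conjStarAlgAut_apply]
      rw [hWdef]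
      simp only [Matrix.mul_assoc]
      rw [hVu']
      simp [Matrix.mul_assoc]
      rfl
    rw [mul_sub, sub_mul, h1, h2]
  have hfrob : frob2 (A - B) = ∑ i, ∑ j, ‖W i j‖ ^ 2 * (lam i - mu j) ^ 2 := by
    rw [← frob2_conj (A - B) hUu hVu, key]
    unfold frob2
    refine Finset.sum_congr rfl fun i _ => Finset.sum_congr rfl fun j _ => ?_
    have hent : (Matrix.diagonal (RCLike.ofReal ∘ lam) * W
        - W * Matrix.diagonal (RCLike.ofReal ∘ mu) : Matrix ι ι ℂ) i j
        = ((RCLike.ofReal (lam i) : ℂ) - RCLike.ofReal (mu j)) * W i j := by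
      simp only [Matrix.sub_apply, Matrix.diagonal_mul, Matrix.mul_diagonal,
        Function.comp_apply]
      ring
    rw [hent, norm_mul, mul_pow, ← RCLike.ofReal_sub, RCLike.norm_ofReal, _root_.sq_abs]
    ring
  set S : Matrix ι ι ℝ := Matrix.of (fun i j => ‖W i j‖ ^ 2) with hSdef
  have hrow : ∀ i, ∑ j, S i j = 1 := by
    intro i
    have h1 : (W * star W) i i = 1 := by rw [hWW]; exact Matrix.one_apply_eq i
    have h2 : (W * star W) i i = ∑ j, ((‖W i j‖ ^ 2 : ℝ) : ℂ) := by
      simp only [Matrix.mul_apply, Matrix.star_eq_conjTranspose, Matrix.conjTranspose_apply]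
      refine Finset.sum_congr rfl fun j _ => ?_
      rw [Complex.star_def, Complex.mul_conj, Complex.sq_norm]
    rw [h2] at h1
    have h3 := congrArg Complex.re h1
    rw [Complex.re_sum] at h3
    simpa [hSdef, ← Complex.ofReal_pow] using h3
  have hcol : ∀ j, ∑ i, S i j = 1 := by
    intro j
    have h1 : (star W * W) j j = 1 := by rw [hWW']; exact Matrix.one_apply_eq j
    have h2 : (star W * W) j j = ∑ i, ((‖W i j‖ ^ 2 : ℝ) : ℂ) := by
      simp only [Matrix.mul_apply, Matrix.star_eq_conjTranspose, Matrix.conjTranspose_apply]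
      refine Finset.sum_congr rfl fun i _ => ?_
      rw [Complex.star_def, ← Complex.normSq_eq_conj_mul_self,
        Complex.sq_norm]
    rw [h2] at h1
    have h3 := congrArg Complex.re h1
    rw [Complex.re_sum] at h3
    simpa [hSdef, ← Complex.ofReal_pow] using h3
  have hS : S ∈ doublyStochastic ℝ ι := by
    rw [mem_doublyStochastic_iff_sum]
    exact ⟨fun i j => by simp [hSdef, sq_nonneg], hrow, hcol⟩
  obtain ⟨w, hw0, hw1, hwS⟩ := exists_eq_sum_perm_of_mem_doublyStochastic hS
  set c : ι → ι → ℝ := fun i j => (lam i - mu j) ^ 2 with hcdef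
  have hT : ∑ i, ∑ j, S i j * c i j = frob2 (A - B) := by rw [hfrob]; rfl
  have hpm : ∀ (σ : Equiv.Perm ι) (i j : ι),
      (σ.permMatrix ℝ) i j = if σ i = j then 1 else 0 := by
    intro σ i j
    simp [Equiv.Perm.permMatrix, PEquiv.toMatrix_apply, Equiv.toPEquiv_apply, eq_comm]
  have hperm : ∀ σ : Equiv.Perm ι,
      ∑ i, ∑ j, (σ.permMatrix ℝ) i j * c i j = ∑ i, c i (σ i) := by
    intro σ
    refine Finset.sum_congr rfl fun i _ => ?_
    rw [Finset.sum_congr rfl fun j (_ : j ∈ Finset.univ) => by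
      rw [hpm σ i j, ite_mul, one_mul, zero_mul]]
    exact Finset.sum_ite_eq Finset.univ (σ i) (c i) |>.trans (by simp)
  have hSpoint : ∀ i j, S i j = ∑ σ : Equiv.Perm ι, w σ * (σ.permMatrix ℝ) i j := by
    intro i j
    rw [← hwS]
    simp [Matrix.sum_apply, Matrix.smul_apply, smul_eq_mul]
  have hsum : ∑ σ : Equiv.Perm ι, w σ * (∑ i, c i (σ i)) = frob2 (A - B) := by
    rw [← hT]
    calc ∑ σ : Equiv.Perm ι, w σ * (∑ i, c i (σ i))
        = ∑ σ : Equiv.Perm ι, ∑ i, ∑ j, w σ * ((σ.permMatrix ℝ) i j * c i j) := by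
          refine Finset.sum_congr rfl fun σ _ => ?_
          rw [← hperm σ, Finset.mul_sum]
          exact Finset.sum_congr rfl fun i _ => by rw [Finset.mul_sum]
      _ = ∑ i, ∑ σ : Equiv.Perm ι, ∑ j, w σ * ((σ.permMatrix ℝ) i j * c i j) :=
          Finset.sum_comm
      _ = ∑ i, ∑ j, ∑ σ : Equiv.Perm ι, w σ * ((σ.permMatrix ℝ) i j * c i j) := by
          exact Finset.sum_congr rfl fun i _ => Finset.sum_comm
      _ = ∑ i, ∑ j, S i j * c i j := by
          refine Finset.sum_congr rfl fun i _ => Finset.sum_congr rfl fun j _ => ?_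
          rw [hSpoint i j, Finset.sum_mul]
          exact Finset.sum_congr rfl fun σ _ => by ring
  have hexists : ∃ σ : Equiv.Perm ι, ∑ i, c i (σ i) ≤ frob2 (A - B) := by
    by_contra hcon
    push_neg at hcon
    have hzero : ∀ σ ∈ (Finset.univ : Finset (Equiv.Perm ι)),
        w σ * ((∑ i, c i (σ i)) - frob2 (A - B)) = 0 := by
      have hsum0 : ∑ σ : Equiv.Perm ι, w σ * ((∑ i, c i (σ i)) - frob2 (A - B)) = 0 := by
        simp only [mul_sub]
        rw [Finset.sum_sub_distrib, hsum, ← Finset.sum_mul, hw1, one_mul, sub_self]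
      refine (Finset.sum_eq_zero_iff_of_nonneg ?_).mp hsum0
      intro σ _
      exact mul_nonneg (hw0 σ) (le_of_lt (sub_pos.mpr (hcon σ)))
    have hzw : ∀ σ : Equiv.Perm ι, w σ = 0 := by
      intro σ
      rcases mul_eq_zero.mp (hzero σ (Finset.mem_univ σ)) with h' | h'
      · exact h'
      · exact absurd h' (ne_of_gt (sub_pos.mpr (hcon σ)))
    rw [Finset.sum_congr rfl fun σ _ => hzw σ] at hw1
    simp at hw1
  obtain ⟨σ, hσ⟩ := hexists
  refine ⟨σ, fun i => ?_⟩
  calc (lam i - mu (σ i)) ^ 2 = c i (σ i) := rfl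
    _ ≤ ∑ i, c i (σ i) :=
        Finset.single_le_sum (f := fun j => c j (σ j)) (fun j _ => sq_nonneg _)
          (Finset.mem_univ i)
    _ ≤ frob2 (A - B) := hσ

lemma eigs_herm {A : Matrix ι ι ℂ} (hA : A.IsHermitian) : eigs A = hA.eigenvalues := by
  rw [eigs, dif_pos hA]

lemma sum_embed_diff (k : ℕ) (O : (Fin k → ℝ) → ℝ) (KO : ℝ≥0) (hK : LipschitzWith KO O)
    (cE E : ℝ) {A B : Matrix ι ι ℂ} (hA : A.IsHermitian) (hB : B.IsHermitian) :
    |(∑ t : Fin k ↪ ι, O fun a => cE * (eigs A (t a) - E)) -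
      ∑ t : Fin k ↪ ι, O fun a => cE * (eigs B (t a) - E)|
      ≤ (Fintype.card (Fin k ↪ ι) : ℝ) * KO * |cE| * Real.sqrt (frob2 (A - B)) := by
  obtain ⟨σ, hσ⟩ := exists_perm_pairing hA hB
  have hpair : ∀ i, |hA.eigenvalues i - hB.eigenvalues (σ i)| ≤ Real.sqrt (frob2 (A - B)) :=
    fun i => Real.abs_le_sqrt (hσ i)
  have hre : (∑ t : Fin k ↪ ι, O fun a => cE * (eigs B (σ (t a)) - E))
      = ∑ t : Fin k ↪ ι, O fun a => cE * (eigs B (t a) - E) := by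
    exact Equiv.sum_comp (Equiv.embeddingCongr (Equiv.refl (Fin k)) σ)
      (fun t => O fun a => cE * (eigs B (t a) - E))
  rw [← hre, ← Finset.sum_sub_distrib]
  refine (Finset.abs_sum_le_sum_abs _ _).trans ?_
  have hterm : ∀ t : Fin k ↪ ι,
      |O (fun a => cE * (eigs A (t a) - E)) - O (fun a => cE * (eigs B (σ (t a)) - E))|
        ≤ (KO : ℝ) * (|cE| * Real.sqrt (frob2 (A - B))) := by
    intro t
    have hd := hK.dist_le_mul (fun a => cE * (eigs A (t a) - E))
      (fun a => cE * (eigs B (σ (t a)) - E))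
    rw [Real.dist_eq] at hd
    refine hd.trans ?_
    refine mul_le_mul_of_nonneg_left ?_ (NNReal.coe_nonneg KO)
    rw [dist_pi_le_iff (by positivity)]
    intro a
    rw [Real.dist_eq, eigs_herm hA, eigs_herm hB]
    have h : cE * (hA.eigenvalues (t a) - E) - cE * (hB.eigenvalues (σ (t a)) - E)
        = cE * (hA.eigenvalues (t a) - hB.eigenvalues (σ (t a))) := by ring
    rw [h, abs_mul]
    exact mul_le_mul_of_nonneg_left (hpair (t a)) (abs_nonneg cE)
  calc ∑ t : Fin k ↪ ι, |O (fun a => cE * (eigs A (t a) - E))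
          - O (fun a => cE * (eigs B (σ (t a)) - E))|
      ≤ ∑ _t : Fin k ↪ ι, (KO : ℝ) * (|cE| * Real.sqrt (frob2 (A - B))) :=
        Finset.sum_le_sum fun t _ => hterm t
    _ = (Fintype.card (Fin k ↪ ι) : ℝ) * KO * |cE| * Real.sqrt (frob2 (A - B)) := by
        rw [Finset.sum_const, Finset.card_univ, nsmul_eq_mul]
        ring

def hermProj (A : Matrix ι ι ℂ) : Matrix ι ι ℂ := (2:ℂ)⁻¹ • (A + Aᴴ)

lemma hermProj_isHermitian (A : Matrix ι ι ℂ) : (hermProj A).IsHermitian := by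
  unfold Matrix.IsHermitian hermProj
  rw [Matrix.conjTranspose_smul, Matrix.conjTranspose_add, Matrix.conjTranspose_conjTranspose]
  rw [show star ((2:ℂ)⁻¹) = (2:ℂ)⁻¹ by norm_num, add_comm]

lemma hermProj_of_herm {A : Matrix ι ι ℂ} (hA : A.IsHermitian) : hermProj A = A := by
  rw [hermProj, show Aᴴ = A from hA, ← two_smul ℂ A, smul_smul]
  norm_num

def toMat (v : ι × ι → ℂ) : Matrix ι ι ℂ := Matrix.of fun i j => v (i, j)

def FF (k : ℕ) (O : (Fin k → ℝ) → ℝ) (cE E : ℝ) (v : ι × ι → ℂ) : ℝ :=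
  ∑ t : Fin k ↪ ι, O fun a => cE * (eigs (hermProj (toMat v)) (t a) - E)

lemma FF_diff (k : ℕ) (O : (Fin k → ℝ) → ℝ) (KO : ℝ≥0) (hK : LipschitzWith KO O)
    (cE E : ℝ) (v w : ι × ι → ℂ) {r : ℝ} (hr : 0 ≤ r) (h : ∀ p, ‖v p - w p‖ ≤ r) :
    |FF k O cE E v - FF k O cE E w| ≤
      (Fintype.card (Fin k ↪ ι) : ℝ) * KO * |cE| * ((Fintype.card ι : ℝ) * r) := by
  have hfb : frob2 (hermProj (toMat v) - hermProj (toMat w)) ≤ ((Fintype.card ι : ℝ) * r) ^ 2 := by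
    have hent : ∀ i j, ‖(hermProj (toMat v) - hermProj (toMat w)) i j‖ ≤ r := by
      intro i j
      have h0 : (hermProj (toMat v) - hermProj (toMat w)) i j
          = (2:ℂ)⁻¹ * ((v (i,j) - w (i,j)) + (starRingEnd ℂ) (v (j,i) - w (j,i))) := by
        simp only [hermProj, toMat, Matrix.sub_apply, Matrix.smul_apply, Matrix.add_apply,
          Matrix.conjTranspose_apply, Matrix.of_apply, smul_eq_mul, Complex.star_def, map_sub]
        ring
      rw [h0, norm_mul]
      have h2 : ‖(2:ℂ)⁻¹‖ = 2⁻¹ := by simp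
      rw [h2]
      have h3 := norm_add_le (v (i,j) - w (i,j)) ((starRingEnd ℂ) (v (j,i) - w (j,i)))
      have hc : ‖(starRingEnd ℂ) (v (j,i) - w (j,i))‖ = ‖v (j,i) - w (j,i)‖ := by
        rw [map_sub, ← map_sub]
        simp only [Complex.norm_conj]
      nlinarith [h (i,j), h (j,i), norm_nonneg (v (i,j) - w (i,j))]
    unfold frob2
    calc ∑ i, ∑ j, ‖(hermProj (toMat v) - hermProj (toMat w)) i j‖ ^ 2
        ≤ ∑ _i : ι, ∑ _j : ι, r ^ 2 := by
          refine Finset.sum_le_sum fun i _ => Finset.sum_le_sum fun j _ => ?_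
          exact pow_le_pow_left₀ (norm_nonneg _) (hent i j) 2
      _ = (Fintype.card ι : ℝ) ^ 2 * r ^ 2 := by
          simp [Finset.sum_const, Finset.card_univ, nsmul_eq_mul]; ring
      _ = ((Fintype.card ι : ℝ) * r) ^ 2 := by ring
  have hsq : Real.sqrt (frob2 (hermProj (toMat v) - hermProj (toMat w)))
      ≤ (Fintype.card ι : ℝ) * r := by
    refine Real.sqrt_le_sqrt hfb |>.trans ?_
    rw [Real.sqrt_sq (by positivity)]
  have h4 := sum_embed_diff k O KO hK cE E (hermProj_isHermitian (toMat v))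
    (hermProj_isHermitian (toMat w))
  refine h4.trans ?_
  exact mul_le_mul_of_nonneg_left hsq (by positivity)

lemma FF_cont (k : ℕ) (O : (Fin k → ℝ) → ℝ) (KO : ℝ≥0) (hK : LipschitzWith KO O) (cE E : ℝ) :
    Continuous (FF (ι := ι) k O cE E) := by
  set D : ℝ := (Fintype.card (Fin k ↪ ι) : ℝ) * KO * |cE| * (Fintype.card ι : ℝ) with hD
  have hD0 : 0 ≤ D := by positivity
  rw [Metric.continuous_iff]
  intro v ε hε
  refine ⟨ε / (D + 1), by positivity, fun w hw => ?_⟩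
  have hentry : ∀ p : ι × ι, ‖w p - v p‖ ≤ dist w v := by
    intro p
    rw [← dist_eq_norm]
    exact dist_le_pi_dist w v p
  have h5 := FF_diff k O KO hK cE E w v dist_nonneg hentry
  rw [Real.dist_eq]
  calc |FF k O cE E w - FF k O cE E v|
      ≤ (Fintype.card (Fin k ↪ ι) : ℝ) * KO * |cE| * ((Fintype.card ι : ℝ) * dist w v) := h5
    _ = D * dist w v := by rw [hD]; ring
    _ ≤ D * (ε / (D + 1)) := mul_le_mul_of_nonneg_left hw.le hD0
    _ < ε := by
        rw [div_eq_inv_mul, ← mul_assoc]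
        have h6 : D * (D + 1)⁻¹ < 1 := by
          rw [mul_inv_lt_iff₀ (by linarith), one_mul]; linarith
        nlinarith

lemma FF_bound (k : ℕ) (O : (Fin k → ℝ) → ℝ) (MO : ℝ)
    (hMO : ∀ u, ‖O u‖ ≤ MO) (cE E : ℝ) (v : ι × ι → ℂ) :
    ‖FF k O cE E v‖ ≤ (Fintype.card (Fin k ↪ ι) : ℝ) * MO := by
  rw [Real.norm_eq_abs, FF]
  refine (Finset.abs_sum_le_sum_abs _ _).trans ?_
  calc ∑ t : Fin k ↪ ι, |O fun a => cE * (eigs (hermProj (toMat v)) (t a) - E)|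
      ≤ ∑ _t : Fin k ↪ ι, MO := Finset.sum_le_sum fun t _ => by
        rw [← Real.norm_eq_abs]; exact hMO _
    _ = _ := by rw [Finset.sum_const, Finset.card_univ, nsmul_eq_mul]

lemma hp2 (n : ℕ) : (1:ℝ)/2^n = (1/2)^n := by rw [div_pow, one_pow]

lemma dbl_iter (x : ℝ) : ∀ m : ℕ, dbl^[m+1] x = Int.fract (2^(m+1) * x) := by
  intro m
  induction m with
  | zero => simp [dbl]
  | succ m ih =>
    rw [Function.iterate_succ_apply', ih, dbl]
    have h : (2:ℝ) * Int.fract (2^(m+1)*x) = 2^(m+1+1)*x - ((2*⌊2^(m+1)*x⌋ : ℤ) : ℝ) := by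
      rw [Int.fract]; push_cast; ring
    rw [h, Int.fract_sub_intCast]

lemma digit_sum (w : ℝ) (hw : 0 ≤ w) (hw1 : w < 1) :
    ∀ L : ℕ, ∑ n ∈ Finset.Icc 1 L, ((⌊2^n * w⌋.toNat % 2 : ℕ) : ℝ) / 2^n
      = (⌊2^L * w⌋ : ℝ) / 2^L := by
  intro L
  induction L with
  | zero =>
    have h0 : ⌊w⌋ = 0 := Int.floor_eq_zero_iff.mpr (Set.mem_Ico.mpr ⟨hw, hw1⟩)
    simp [h0]
  | succ L ih =>
    rw [Finset.sum_Icc_succ_top (by omega : 1 ≤ L+1), ih]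
    set a := ⌊(2:ℝ)^L*w⌋ with ha
    have ha0 : 0 ≤ a := Int.floor_nonneg.mpr (by positivity)
    have h1 : (a:ℝ) ≤ 2^L*w := Int.floor_le _
    have h2' : (2:ℝ)^L*w < a+1 := Int.lt_floor_add_one _
    have heq : (2:ℝ)^(L+1)*w = 2*(2^L*w) := by ring
    have hge : (2*a : ℤ) ≤ ⌊(2:ℝ)^(L+1)*w⌋ := by
      rw [heq]; exact Int.le_floor.mpr (by push_cast; linarith)
    have hlt : ⌊(2:ℝ)^(L+1)*w⌋ < 2*a+2 := by
      rw [heq]; exact Int.floor_lt.mpr (by push_cast; linarith)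
    set r : ℕ := ⌊(2:ℝ)^(L+1)*w⌋.toNat % 2 with hr
    have hkey : (⌊(2:ℝ)^(L+1)*w⌋ : ℤ) = 2*a + (r : ℤ) := by omega
    have hfl : ((⌊(2:ℝ)^(L+1)*w⌋ : ℤ) : ℝ) = 2*(a:ℝ) + (r : ℝ) := by exact_mod_cast hkey
    rw [hfl]
    have hp : (0:ℝ) < 2^L := by positivity
    field_simp
    ring

lemma bdigit_shift (x : ℝ) (hx : 0 ≤ x) (m n : ℕ) (hn : 1 ≤ n) :
    bdigit x (n + m) = ⌊2^n * Int.fract (2^m * x)⌋.toNat % 2 := by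
  unfold bdigit
  have hsplit : ⌊(2:ℝ)^(n+m) * x⌋ = ⌊2^n * Int.fract (2^m*x)⌋ + 2^n * ⌊(2:ℝ)^m*x⌋ := by
    have h : (2:ℝ)^(n+m)*x = 2^n * Int.fract (2^m*x) + ((2^n * ⌊(2:ℝ)^m*x⌋ : ℤ) : ℝ) := by
      rw [Int.fract]; push_cast [pow_add]; ring
    rw [h, Int.floor_add_intCast]
  rw [hsplit]
  have h1 : 0 ≤ ⌊2^n * Int.fract ((2:ℝ)^m*x)⌋ :=
    Int.floor_nonneg.mpr (mul_nonneg (by positivity) (Int.fract_nonneg _))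
  have h2 : 0 ≤ ⌊(2:ℝ)^m*x⌋ := Int.floor_nonneg.mpr (by positivity)
  obtain ⟨n', rfl⟩ : ∃ n', n = n' + 1 := ⟨n - 1, by omega⟩
  have hpow : (2:ℤ)^(n'+1) * ⌊(2:ℝ)^m*x⌋ = 2 * (2^n' * ⌊(2:ℝ)^m*x⌋) := by ring
  rw [hpow]
  have h3 : 0 ≤ (2:ℤ)^n' * ⌊(2:ℝ)^m*x⌋ := by positivity
  omega

lemma geom_range (L : ℕ) : ∑ n ∈ Finset.range (L+1), ((1:ℝ)/2)^n = 2 - (1/2)^L := by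
  induction L with
  | zero => norm_num
  | succ L ih => rw [Finset.sum_range_succ, ih]; ring

lemma geom_Icc (L : ℕ) : ∑ n ∈ Finset.Icc 1 L, ((1:ℝ)/2)^n = 1 - (1/2)^L := by
  induction L with
  | zero => simp
  | succ L ih => rw [Finset.sum_Icc_succ_top (by omega : 1 ≤ L+1), ih]; ring

lemma hsummable (c : ℕ → Prop) [DecidablePred c] :
    Summable (fun n => if c n then (1:ℝ)/2^n else 0) := by
  refine Summable.of_nonneg_of_le (fun n => by positivity) (fun n => ?_) summable_geometric_two
  split
  · rw [hp2]
  · positivity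

lemma tail_summable (L : ℕ) (c : ℕ → Bool) :
    Summable (fun n => if L < n then (if c n then (1:ℝ)/2^n else 0) else 0) := by
  refine Summable.of_nonneg_of_le (fun n => by positivity) (fun n => ?_) summable_geometric_two
  split_ifs with h1 h2
  · rw [hp2]
  · positivity
  · positivity

lemma tail_nonneg (N : ℕ) (b : ℕ × ℕ → Bool) (j : ℕ) :
    0 ≤ ∑' n : ℕ, if LL N < n then (if b (n, j) then (1:ℝ) / 2 ^ n else 0) else 0 :=
  tsum_nonneg fun n => by positivity

lemma tail_tsum_val (L : ℕ) :
    ∑' n : ℕ, (if L < n then (1:ℝ)/2^n else 0) = (1/2)^L := by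
  have hs2 : Summable (fun n => if n ≤ L then (1:ℝ)/2^n else 0) := hsummable _
  have hsg : Summable (fun n : ℕ => ((1:ℝ)/2)^n) := summable_geometric_two
  have hpt : ∀ n : ℕ, (if L < n then (1:ℝ)/2^n else 0)
      = ((1:ℝ)/2)^n - (if n ≤ L then (1:ℝ)/2^n else 0) := by
    intro n
    rcases le_or_gt n L with h | h
    · simp [h, not_lt.mpr h]
    · simp [h, not_le.mpr h, hp2]
  have hfin : ∑' n : ℕ, (if n ≤ L then (1:ℝ)/2^n else 0)
      = ∑ n ∈ Finset.range (L+1), ((1:ℝ)/2)^n := by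
    rw [tsum_eq_sum (s := Finset.range (L+1))]
    · refine Finset.sum_congr rfl fun n hn => ?_
      rw [if_pos (Nat.lt_succ_iff.mp (Finset.mem_range.mp hn)), hp2]
    · intro n hn
      rw [if_neg fun h => hn (Finset.mem_range.mpr (Nat.lt_succ_of_le h))]
  rw [tsum_congr hpt, Summable.tsum_sub hsg hs2, tsum_geometric_two, hfin, geom_range]
  ring

lemma tail_le (N : ℕ) (b : ℕ × ℕ → Bool) (j : ℕ) :
    (∑' n : ℕ, if LL N < n then (if b (n, j) then (1:ℝ) / 2 ^ n else 0) else 0)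
      ≤ ((2:ℝ)^(LL N))⁻¹ := by
  have hle : ∀ n : ℕ, (if LL N < n then (if b (n, j) then (1:ℝ) / 2 ^ n else 0) else 0)
      ≤ (if LL N < n then (1:ℝ)/2^n else 0) := by
    intro n
    split_ifs with h1 h2
    · exact le_rfl
    · positivity
    · exact le_rfl
  calc (∑' n : ℕ, if LL N < n then (if b (n, j) then (1:ℝ) / 2 ^ n else 0) else 0)
      ≤ ∑' n : ℕ, (if LL N < n then (1:ℝ)/2^n else 0) :=
        Summable.tsum_le_tsum hle (tail_summable (LL N) (fun n => b (n, j))) (hsummable _)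
    _ = (1/2)^(LL N) := tail_tsum_val _
    _ = ((2:ℝ)^(LL N))⁻¹ := by rw [← hp2, one_div]

lemma bdigit_le_one (x : ℝ) (n : ℕ) : (bdigit x n : ℝ) ≤ 1 := by
  have h : bdigit x n ≤ 1 := Nat.lt_succ_iff.mp (Nat.mod_lt _ (by norm_num))
  exact_mod_cast h

lemma head_nonneg (N : ℕ) (x : ℝ) (j : ℕ) :
    0 ≤ ∑ n ∈ Finset.Icc 1 (LL N), (bdigit x (n + j) : ℝ) / 2 ^ n :=
  Finset.sum_nonneg fun n _ => by positivity

lemma head_le (N : ℕ) (x : ℝ) (j : ℕ) :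
    ∑ n ∈ Finset.Icc 1 (LL N), (bdigit x (n + j) : ℝ) / 2 ^ n ≤ 1 - ((2:ℝ)^(LL N))⁻¹ := by
  calc ∑ n ∈ Finset.Icc 1 (LL N), (bdigit x (n + j) : ℝ) / 2 ^ n
      ≤ ∑ n ∈ Finset.Icc 1 (LL N), ((1:ℝ)/2)^n := by
        refine Finset.sum_le_sum fun n _ => ?_
        rw [← hp2]
        gcongr
        exact bdigit_le_one x (n+j)
    _ = 1 - (1/2)^(LL N) := geom_Icc _
    _ = 1 - ((2:ℝ)^(LL N))⁻¹ := by rw [← hp2, one_div]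

lemma yk_mem (N : ℕ) (x : ℝ) (b : ℕ × ℕ → Bool) (j : ℕ) :
    yk N x b j ∈ Set.Icc (0:ℝ) 1 := by
  constructor
  · exact add_nonneg (head_nonneg N x j) (tail_nonneg N b j)
  · have h1 := head_le N x j
    have h2 := tail_le N b j
    unfold yk
    linarith

lemma orbit_yk_close (N : ℕ) (x : ℝ) (hx : 0 ≤ x) (b : ℕ × ℕ → Bool) (m : ℕ) :
    |dbl^[m+1] x - yk N x b (m+1)| ≤ ((2:ℝ)^(LL N))⁻¹ := by
  set L := LL N
  set w := Int.fract ((2:ℝ)^(m+1) * x) with hwdef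
  have hw0 : 0 ≤ w := Int.fract_nonneg _
  have hw1 : w < 1 := Int.fract_lt_one _
  have hhead : ∑ n ∈ Finset.Icc 1 L, (bdigit x (n + (m+1)) : ℝ) / 2 ^ n
      = (⌊2^L * w⌋ : ℝ) / 2^L := by
    rw [Finset.sum_congr rfl fun n hn => by
      rw [bdigit_shift x hx (m+1) n (Finset.mem_Icc.mp hn).1]]
    exact digit_sum w hw0 hw1 L
  have hfl1 : (⌊(2:ℝ)^L * w⌋ : ℝ) ≤ 2^L * w := Int.floor_le _
  have hfl2 : (2:ℝ)^L * w < ⌊(2:ℝ)^L * w⌋ + 1 := Int.lt_floor_add_one _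
  have hpL : (0:ℝ) < 2^L := by positivity
  have hd1 : 0 ≤ w - (⌊(2:ℝ)^L * w⌋ : ℝ)/2^L := by
    rw [sub_nonneg, div_le_iff₀ hpL]
    linarith [hfl1]
  have hd2 : w - (⌊(2:ℝ)^L * w⌋ : ℝ)/2^L ≤ (2^L)⁻¹ := by
    rw [sub_le_iff_le_add]
    rw [inv_eq_one_div, ← add_div, le_div_iff₀ hpL]
    linarith [hfl2]
  have ht0 := tail_nonneg N b (m+1)
  have ht1 := tail_le N b (m+1)
  rw [dbl_iter x m, ← hwdef, yk, hhead]
  rw [abs_le]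
  constructor <;> [linarith; linarith]

lemma key_growth (a N : ℕ) (hN : 2 ≤ N) :
    (N:ℝ)^a ≤ 2^(a^2+1) * 2^(LL N) := by
  have hN2 : (2:ℝ) ≤ (N:ℝ) := by exact_mod_cast hN
  have hN0 : (0:ℝ) < N := by linarith
  set t := Real.logb 2 N with htdef
  have ht1 : 1 ≤ t := by
    rw [htdef, show (1:ℝ) = Real.logb 2 2 by
      rw [Real.logb_self_eq_one] <;> norm_num]
    exact Real.logb_le_logb_of_le (by norm_num) (by norm_num) hN2
  have ht0 : 0 ≤ t := by linarith
  have hNt : (2:ℝ)^t = N := Real.rpow_logb (by norm_num) (by norm_num) hN0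
  have h1 : ((N:ℝ))^a = (2:ℝ)^(t * (a:ℝ)) := by
    rw [← hNt, ← Real.rpow_natCast ((2:ℝ)^t) a, ← Real.rpow_mul (by norm_num)]
  have h2 : t * (a:ℝ) ≤ ((a:ℕ):ℝ)^2 + t^6 := by
    rcases le_total t ((a:ℕ):ℝ) with h | h
    · nlinarith [pow_nonneg ht0 6]
    · have h26 : t^2 ≤ t^6 := pow_le_pow_right₀ ht1 (by norm_num)
      nlinarith [sq_nonneg ((a:ℕ):ℝ)]
  have h3 : t^6 ≤ (LL N : ℝ) + 1 := by
    have := Nat.lt_floor_add_one (t^6)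
    rw [htdef] at *
    exact le_of_lt (by exact_mod_cast this)
  calc ((N:ℝ))^a = (2:ℝ)^(t*(a:ℝ)) := h1
    _ ≤ (2:ℝ)^(((a:ℕ):ℝ)^2 + t^6) := Real.rpow_le_rpow_of_exponent_le one_le_two h2
    _ ≤ (2:ℝ)^(((a:ℕ):ℝ)^2 + ((LL N:ℝ) + 1)) :=
        Real.rpow_le_rpow_of_exponent_le one_le_two (by linarith)
    _ = (2:ℝ)^(((a^2 + 1 + LL N : ℕ)):ℝ) := by push_cast; ring_nf
    _ = 2^(a^2+1+LL N) := Real.rpow_natCast 2 _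
    _ = 2^(a^2+1) * 2^(LL N) := pow_add 2 _ _

end Stmt8
end Stmt8Aux
set_option maxHeartbeats 4000000
set_option maxRecDepth 8000

open Stmt8 in
theorem stmt_8 (f : ℝ → ℂ) (hf : Admissible f) (hf4 : ContDiff ℝ 4 f) (mLim : ℂ → ℂ)
    (hm : ∀ z : ℂ, 0 < z.im → 0 < (mLim z).im ∧
      (∫ x in (0:ℝ)..1, (((gFun f x : ℝ) : ℂ) * mLim z + z)⁻¹) = -(mLim z))
    (ρ : ℝ → ℝ) (hρc : Continuous ρ) (hρ0 : ∀ E, 0 ≤ ρ E)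
    (hρi : MeasureTheory.Integrable ρ) (hρ1 : (∫ x, ρ x) = 1)
    (hρm : ∀ z : ℂ, 0 < z.im → mLim z = ∫ x : ℝ, ((x : ℂ) - z)⁻¹ * ((ρ x : ℝ) : ℂ))
    (k : ℕ) (hk : 1 ≤ k) (O : (Fin k → ℝ) → ℝ) (hO : ContDiff ℝ (⊤ : ℕ∞) O)
    (hOc : HasCompactSupport O)
    (ε : ℝ) (hε : 0 < ε) (E : ℝ) (hE : ε ≤ ρ E)
    {Ω : Type} [MeasurableSpace Ω] (μ : Measure Ω) (X : Ω → ℝ) (B : Ω → ℕ × ℕ → Bool)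
    (hspace : IsResamplingSpace μ X B) :
    ∃ κ C : ℝ, 0 < κ ∧ 0 < C ∧ ∀ N : ℕ, 2 ≤ N →
      |((Nat.factorial (2 * N - k) : ℝ) / (Nat.factorial (2 * N) : ℝ)) * (2 * (N : ℝ)) ^ k *
        (SO unif (fun x => HX N f x) O E 1 -
          SO μ (fun ω => HY N f (X ω) (B ω)) O E 1)|
        ≤ C * (N : ℝ) ^ (-κ) := by
  classical
  obtain ⟨hfper, hfC2, hfmean, hgf⟩ := hf
  obtain ⟨KO, hKO⟩ := ContDiff.lipschitzWith_of_hasCompactSupport hOc hO (by simp)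
  obtain ⟨MO, hMO⟩ := hOc.exists_bound_of_continuous hO.continuous
  have hfc : Continuous f := hfC2.continuous
  obtain ⟨C0, hC0⟩ := (isCompact_Icc (a := (0:ℝ)) (b := 1)).exists_bound_of_continuousOn
      ((hfC2.continuous_deriv (by norm_num)).continuousOn)
  set Kf : ℝ := max C0 0 with hKfdef
  have hKf0 : 0 ≤ Kf := le_max_right _ _
  have hfLip : ∀ u ∈ Set.Icc (0:ℝ) 1, ∀ v ∈ Set.Icc (0:ℝ) 1, ‖f u - f v‖ ≤ Kf * |u - v| := by
    intro u hu v hv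
    have hdiff : ∀ y ∈ Set.Icc (0:ℝ) 1, DifferentiableAt ℝ f y :=
      fun y _ => (hfC2.differentiable (by norm_num)).differentiableAt
    have h := Convex.norm_image_sub_le_of_norm_deriv_le (C := Kf) hdiff
      (fun y hy => (hC0 y hy).trans (by rw [hKfdef]; exact le_max_left _ _)) (convex_Icc 0 1) hv hu
    simpa [Real.norm_eq_abs] using h
  obtain ⟨hμP, hmapX, hmapB, hindep⟩ := hspace
  haveI := hμP
  have hunifP : IsProbabilityMeasure unif := by
    constructor
    unfold unif
    rw [Measure.restrict_apply_univ, Real.volume_Icc]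
    norm_num
  have hXae : AEMeasurable X μ := by
    by_contra h
    have h1 : unif Set.univ = 1 := hunifP.measure_univ
    rw [← hmapX, Measure.map_of_not_aemeasurable h] at h1
    simp at h1
  have hBae : ∀ p : ℕ × ℕ, AEMeasurable (fun ω => B ω p) μ := by
    intro p
    by_contra h
    have h1 : bern Set.univ = 1 := by
      simp only [bern, Measure.coe_add, Pi.add_apply, Measure.coe_smul, Pi.smul_apply,
        Measure.dirac_apply_of_mem (Set.mem_univ _), smul_eq_mul, mul_one]
      exact ENNReal.inv_two_add_inv_two
    rw [← hmapB p, Measure.map_of_not_aemeasurable h] at h1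
    simp at h1
  set X' : Ω → ℝ := hXae.mk X with hX'def
  have hX'm : Measurable X' := hXae.measurable_mk
  have hXeq : X =ᵐ[μ] X' := hXae.ae_eq_mk
  set B' : Ω → ℕ × ℕ → Bool := fun ω p => (hBae p).mk (fun ω => B ω p) ω with hB'def
  have hB'm : ∀ p, Measurable fun ω => B' ω p := fun p => (hBae p).measurable_mk
  have hBeq : ∀ᵐ ω ∂μ, ∀ p, B ω p = B' ω p := ae_all_iff.mpr fun p => (hBae p).ae_eq_mk
  have hXmem : ∀ᵐ ω ∂μ, X ω ∈ Set.Icc (0:ℝ) 1 := by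
    have h0 : μ (X ⁻¹' (Set.Icc (0:ℝ) 1)ᶜ) = 0 := by
      rw [← Measure.map_apply_of_aemeasurable hXae measurableSet_Icc.compl, hmapX]
      unfold unif
      rw [Measure.restrict_apply measurableSet_Icc.compl, Set.compl_inter_self]
      exact measure_empty
    rw [ae_iff]
    exact h0
  refine ⟨1, ((KO:ℝ)+1) * (Kf+1) * 2^((4*k+5)^2+1), one_pos, by positivity, ?_⟩
  intro N hN
  have hN2 : (2:ℝ) ≤ (N:ℝ) := by exact_mod_cast hN
  have hN0 : (0:ℝ) < N := by linarith
  have hinv2L0 : (0:ℝ) ≤ ((2:ℝ)^(LL N))⁻¹ := by positivity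
  set r : ℝ := Kf * ((2:ℝ)^(LL N))⁻¹ with hrdef
  have hr0 : 0 ≤ r := mul_nonneg hKf0 hinv2L0
  set cE : ℝ := (Fintype.card (Fin N ⊕ Fin N) : ℝ) * 1 with hcEdef
  have hcard : ((Fintype.card (Fin N ⊕ Fin N) : ℕ) : ℝ) = 2*(N:ℝ) := by
    rw [Fintype.card_sum, Fintype.card_fin]
    push_cast
    ring
  have hcE0 : 0 ≤ cE := by rw [hcEdef]; positivity
  set GX : ℝ → ℝ := fun x => FF k O cE E
    (fun p : (Fin N ⊕ Fin N) × (Fin N ⊕ Fin N) => HX N f x p.1 p.2) with hGXdef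
  set GY : Ω → ℝ := fun ω => FF k O cE E
    (fun p : (Fin N ⊕ Fin N) × (Fin N ⊕ Fin N) => HY N f (X ω) (B ω) p.1 p.2) with hGYdef
  have hHXh : ∀ x, (HX N f x).IsHermitian := by
    intro x
    show (HX N f x)ᴴ = HX N f x
    unfold HX
    rw [Matrix.fromBlocks_conjTranspose, Matrix.conjTranspose_zero,
      Matrix.conjTranspose_conjTranspose]
  have hHYh : ∀ x b, (HY N f x b).IsHermitian := by
    intro x b
    show (HY N f x b)ᴴ = HY N f x b
    unfold HY
    rw [Matrix.fromBlocks_conjTranspose, Matrix.conjTranspose_zero,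
      Matrix.conjTranspose_conjTranspose]
  have hmatX : ∀ x, hermProj (toMat
      (fun p : (Fin N ⊕ Fin N) × (Fin N ⊕ Fin N) => HX N f x p.1 p.2)) = HX N f x :=
    fun x => hermProj_of_herm (hHXh x)
  have hmatY : ∀ x b, hermProj (toMat
      (fun p : (Fin N ⊕ Fin N) × (Fin N ⊕ Fin N) => HY N f x b p.1 p.2)) = HY N f x b :=
    fun x b => hermProj_of_herm (hHYh x b)
  have hSOX : SO unif (fun x => HX N f x) O E 1 = ∫ x, GX x ∂unif := by
    unfold SO
    congr 1
    funext x
    rw [hGXdef]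
    simp only [FF, hmatX x, hcEdef]
  have hSOY : SO μ (fun ω => HY N f (X ω) (B ω)) O E 1 = ∫ ω, GY ω ∂μ := by
    unfold SO
    congr 1
    funext ω
    rw [hGYdef]
    simp only [FF, hmatY (X ω) (B ω), hcEdef]
  have hdblm : Measurable dbl := (measurable_id.const_mul (2:ℝ)).fract
  have hmXmeas : Measurable fun x =>
      (fun p : (Fin N ⊕ Fin N) × (Fin N ⊕ Fin N) => HX N f x p.1 p.2) := by
    refine measurable_pi_lambda _ fun p => ?_
    obtain ⟨pi, pj⟩ := p
    rcases pi with i | i <;> rcases pj with j | j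
    · simp only [HX, Matrix.fromBlocks_apply₁₁, Matrix.zero_apply]
      exact measurable_const
    · simp only [HX, Matrix.fromBlocks_apply₁₂, Xmat, Matrix.of_apply]
      exact (hfc.measurable.comp (hdblm.iterate _)).const_mul _
    · simp only [HX, Matrix.fromBlocks_apply₂₁, Matrix.conjTranspose_apply, Xmat,
        Matrix.of_apply]
      exact continuous_star.measurable.comp
        ((hfc.measurable.comp (hdblm.iterate _)).const_mul _)
    · simp only [HX, Matrix.fromBlocks_apply₂₂, Matrix.zero_apply]
      exact measurable_const
  have hGXm : Measurable GX := (FF_cont k O KO hKO cE E).measurable.comp hmXmeas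
  have hykm : ∀ m : ℕ, Measurable fun ω => yk N (X' ω) (B' ω) m := by
    intro m
    have hhead : Measurable fun ω =>
        ∑ n ∈ Finset.Icc 1 (LL N), (bdigit (X' ω) (n + m) : ℝ) / 2 ^ n := by
      apply Finset.measurable_sum
      intro n _
      have hb : Measurable fun x : ℝ => (bdigit x (n + m) : ℝ) := by
        have h1 : Measurable fun x : ℝ => ⌊(2:ℝ)^(n+m) * x⌋ :=
          (measurable_id.const_mul _).floor
        exact (measurable_from_top (f := fun z : ℤ => ((z.toNat % 2 : ℕ) : ℝ))).comp h1
      exact (hb.comp hX'm).div_const _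
    have htail : Measurable fun ω =>
        ∑' n : ℕ, if LL N < n then (if B' ω (n, m) then (1:ℝ) / 2 ^ n else 0) else 0 := by
      apply measurable_of_tendsto_metrizable
        (f := fun M ω => ∑ n ∈ Finset.range M,
          if LL N < n then (if B' ω (n, m) then (1:ℝ) / 2 ^ n else 0) else 0)
      · intro M
        apply Finset.measurable_sum
        intro n _
        by_cases h : LL N < n
        · simp only [if_pos h]
          exact (measurable_from_top (f := fun t : Bool => if t then (1:ℝ)/2^n else 0)).comp
            (hB'm (n, m))
        · simp only [if_neg h]
          exact measurable_const
      · rw [tendsto_pi_nhds]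
        intro ω
        exact (tail_summable (LL N) (fun n => B' ω (n, m))).hasSum.tendsto_sum_nat
    exact hhead.add htail
  have hmYmeas : Measurable fun ω =>
      (fun p : (Fin N ⊕ Fin N) × (Fin N ⊕ Fin N) => HY N f (X' ω) (B' ω) p.1 p.2) := by
    refine measurable_pi_lambda _ fun p => ?_
    obtain ⟨pi, pj⟩ := p
    rcases pi with i | i <;> rcases pj with j | j
    · simp only [HY, Matrix.fromBlocks_apply₁₁, Matrix.zero_apply]
      exact measurable_const
    · simp only [HY, Matrix.fromBlocks_apply₁₂, Ymat, Matrix.of_apply]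
      exact (hfc.measurable.comp (hykm _)).const_mul _
    · simp only [HY, Matrix.fromBlocks_apply₂₁, Matrix.conjTranspose_apply, Ymat,
        Matrix.of_apply]
      exact continuous_star.measurable.comp ((hfc.measurable.comp (hykm _)).const_mul _)
    · simp only [HY, Matrix.fromBlocks_apply₂₂, Matrix.zero_apply]
      exact measurable_const
  have hGY'm : Measurable fun ω => FF k O cE E
      (fun p : (Fin N ⊕ Fin N) × (Fin N ⊕ Fin N) => HY N f (X' ω) (B' ω) p.1 p.2) :=
    (FF_cont k O KO hKO cE E).measurable.comp hmYmeas
  have hGYae : AEStronglyMeasurable GY μ := by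
    refine hGY'm.aestronglyMeasurable.congr ?_
    filter_upwards [hXeq, hBeq] with ω hx hb
    have hx' : X' ω = X ω := hx.symm
    have hb' : B' ω = B ω := (funext hb).symm
    rw [hGYdef]
    simp only
    rw [hx', hb']
  have hbnd : ∀ v : (Fin N ⊕ Fin N) × (Fin N ⊕ Fin N) → ℂ,
      ‖FF k O cE E v‖ ≤ (Fintype.card (Fin k ↪ (Fin N ⊕ Fin N)) : ℝ) * MO :=
    fun v => FF_bound k O MO hMO cE E v
  have hIX : Integrable (fun ω => GX (X ω)) μ :=
    Integrable.mono' (integrable_const _)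
      ((hGXm.comp_aemeasurable hXae).aestronglyMeasurable)
      (Filter.Eventually.of_forall fun ω => hbnd _)
  have hIY : Integrable GY μ :=
    Integrable.mono' (integrable_const _) hGYae (Filter.Eventually.of_forall fun ω => hbnd _)
  have hentry : ∀ᵐ ω ∂μ, ∀ (i j : Fin N),
      ‖Xmat N f (X ω) i j - Ymat N f (X ω) (B ω) i j‖ ≤ r := by
    filter_upwards [hXmem] with ω hmem
    intro i j
    simp only [Xmat, Ymat, Matrix.of_apply]
    rw [← mul_sub, norm_mul]
    have hu : dbl^[2*N*i.val+j.val+1] (X ω) ∈ Set.Icc (0:ℝ) 1 := by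
      rw [dbl_iter]
      exact ⟨Int.fract_nonneg _, (Int.fract_lt_one _).le⟩
    have hv := yk_mem N (X ω) (B ω) (2*N*i.val+j.val+1)
    have hclose := orbit_yk_close N (X ω) hmem.1 (B ω) (2*N*i.val+j.val)
    have hnrm : ‖(((Real.sqrt N : ℝ) : ℂ))⁻¹‖ ≤ 1 := by
      rw [norm_inv, Complex.norm_real, Real.norm_eq_abs,
        _root_.abs_of_nonneg (Real.sqrt_nonneg _)]
      have h1 : (1:ℝ) ≤ Real.sqrt N := Real.one_le_sqrt.mpr (by linarith)
      exact inv_le_one_of_one_le₀ h1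
    calc ‖(((Real.sqrt N : ℝ) : ℂ))⁻¹‖ *
          ‖f (dbl^[2*N*i.val+j.val+1] (X ω)) - f (yk N (X ω) (B ω) (2*N*i.val+j.val+1))‖
        ≤ 1 * (Kf * |dbl^[2*N*i.val+j.val+1] (X ω) - yk N (X ω) (B ω) (2*N*i.val+j.val+1)|) :=
          mul_le_mul hnrm (hfLip _ hu _ hv) (norm_nonneg _) one_pos.le
      _ ≤ 1 * (Kf * ((2:ℝ)^(LL N))⁻¹) := by
          rw [one_mul, one_mul]
          exact mul_le_mul_of_nonneg_left hclose hKf0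
      _ = r := by rw [one_mul, hrdef]
  have hdiffpt : ∀ᵐ ω ∂μ, ‖GX (X ω) - GY ω‖ ≤
      (Fintype.card (Fin k ↪ (Fin N ⊕ Fin N)) : ℝ) * KO * |cE| *
        ((Fintype.card (Fin N ⊕ Fin N) : ℝ) * r) := by
    filter_upwards [hentry] with ω hent
    rw [Real.norm_eq_abs, hGXdef, hGYdef]
    simp only
    apply FF_diff k O KO hKO cE E _ _ hr0
    intro p
    obtain ⟨pi, pj⟩ := p
    rcases pi with i | i <;> rcases pj with j | j
    · simp only [HX, HY, Matrix.fromBlocks_apply₁₁, Matrix.zero_apply, sub_zero, norm_zero]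
      exact hr0
    · simp only [HX, HY, Matrix.fromBlocks_apply₁₂]
      exact hent i j
    · simp only [HX, HY, Matrix.fromBlocks_apply₂₁, Matrix.conjTranspose_apply]
      rw [← star_sub, norm_star]
      exact hent j i
    · simp only [HX, HY, Matrix.fromBlocks_apply₂₂, Matrix.zero_apply, sub_zero, norm_zero]
      exact hr0
  have hSOdiff : |SO unif (fun x => HX N f x) O E 1 - SO μ (fun ω => HY N f (X ω) (B ω)) O E 1|
      ≤ (Fintype.card (Fin k ↪ (Fin N ⊕ Fin N)) : ℝ) * KO * |cE| *
        ((Fintype.card (Fin N ⊕ Fin N) : ℝ) * r) := by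
    rw [hSOX, hSOY, ← hmapX, integral_map hXae hGXm.aestronglyMeasurable,
      ← integral_sub hIX hIY]
    have h7 := norm_integral_le_of_norm_le_const (μ := μ) hdiffpt
    rwa [probReal_univ, mul_one, Real.norm_eq_abs] at h7
  have hPfac : |((Nat.factorial (2*N - k) : ℝ)) / ((Nat.factorial (2*N) : ℝ))| ≤ 1 := by
    rw [_root_.abs_div, _root_.abs_of_nonneg (by positivity), _root_.abs_of_nonneg (by positivity)]
    rw [div_le_one (by positivity)]
    exact_mod_cast Nat.factorial_le (by omega)
  have hMemb : (Fintype.card (Fin k ↪ (Fin N ⊕ Fin N)) : ℝ) ≤ (2*(N:ℝ))^k := by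
    have h1 : Fintype.card (Fin k ↪ (Fin N ⊕ Fin N)) ≤
        Fintype.card (Fin k → (Fin N ⊕ Fin N)) :=
      Fintype.card_le_of_injective _ DFunLike.coe_injective
    have h2 : Fintype.card (Fin k → (Fin N ⊕ Fin N)) = (N+N)^k := by
      rw [Fintype.card_fun, Fintype.card_sum, Fintype.card_fin, Fintype.card_fin]
    calc (Fintype.card (Fin k ↪ (Fin N ⊕ Fin N)) : ℝ) ≤ (((N+N)^k : ℕ) : ℝ) := by
          exact_mod_cast h1.trans (le_of_eq h2)
      _ = (2*(N:ℝ))^k := by push_cast; ring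
  have habscE : |cE| = 2*(N:ℝ) := by
    rw [_root_.abs_of_nonneg hcE0, hcEdef, mul_one, hcard]
  have hgrow : (N:ℝ)^(4*k+4) * ((2:ℝ)^(LL N))⁻¹ ≤ 2^((4*k+5)^2+1) * (N:ℝ)⁻¹ := by
    rw [← div_eq_mul_inv, ← div_eq_mul_inv, div_le_div_iff₀ (by positivity) hN0]
    calc (N:ℝ)^(4*k+4) * N = (N:ℝ)^(4*k+5) := by rw [← pow_succ]
      _ ≤ 2^((4*k+5)^2+1) * 2^(LL N) := key_growth (4*k+5) N hN
  have h8 : |SO unif (fun x => HX N f x) O E 1 - SO μ (fun ω => HY N f (X ω) (B ω)) O E 1|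
      ≤ (2*(N:ℝ))^k * KO * (2*(N:ℝ)) * ((2*(N:ℝ)) * (Kf * ((2:ℝ)^(LL N))⁻¹)) := by
    refine hSOdiff.trans ?_
    rw [habscE, hcard, hrdef]
    have hKO0 : (0:ℝ) ≤ KO := NNReal.coe_nonneg KO
    gcongr
  rw [show ((N:ℝ)^(-(1:ℝ))) = ((N:ℝ))⁻¹ from by rw [Real.rpow_neg_one]]
  rw [_root_.abs_mul, _root_.abs_mul]
  have hQk : |(2*(N:ℝ))^k| = (2*(N:ℝ))^k := _root_.abs_of_nonneg (by positivity)
  rw [hQk]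
  have hKO0 : (0:ℝ) ≤ KO := NNReal.coe_nonneg KO
  calc |((Nat.factorial (2*N - k) : ℝ)) / ((Nat.factorial (2*N) : ℝ))| * (2*(N:ℝ))^k *
        |SO unif (fun x => HX N f x) O E 1 - SO μ (fun ω => HY N f (X ω) (B ω)) O E 1|
      ≤ 1 * (2*(N:ℝ))^k *
        ((2*(N:ℝ))^k * KO * (2*(N:ℝ)) * ((2*(N:ℝ)) * (Kf * ((2:ℝ)^(LL N))⁻¹))) := by
        refine mul_le_mul (mul_le_mul_of_nonneg_right hPfac (by positivity)) h8
          (_root_.abs_nonneg _) (by positivity)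
    _ = (KO:ℝ) * Kf * ((2*(N:ℝ))^k * (2*(N:ℝ))^k * (2*(N:ℝ)) * (2*(N:ℝ))) *
        ((2:ℝ)^(LL N))⁻¹ := by ring
    _ = (KO:ℝ) * Kf * ((2*(N:ℝ))^(2*k+2)) * ((2:ℝ)^(LL N))⁻¹ := by
        congr 2
        rw [← pow_add, ← pow_succ, ← pow_succ]
        congr 1
        ring
    _ ≤ (KO:ℝ) * Kf * (((N:ℝ)^2)^(2*k+2)) * ((2:ℝ)^(LL N))⁻¹ := by
        gcongr
        nlinarith
    _ = (KO:ℝ) * Kf * ((N:ℝ)^(4*k+4) * ((2:ℝ)^(LL N))⁻¹) := by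
        rw [← pow_mul]
        ring_nf
    _ ≤ (KO:ℝ) * Kf * (2^((4*k+5)^2+1) * (N:ℝ)⁻¹) := by
        exact mul_le_mul_of_nonneg_left hgrow (by positivity)
    _ ≤ ((KO:ℝ)+1) * (Kf+1) * 2^((4*k+5)^2+1) * (N:ℝ)⁻¹ := by
        have h9 : (KO:ℝ) * Kf ≤ ((KO:ℝ)+1) * (Kf+1) := by nlinarith
        have h10 : (0:ℝ) ≤ 2^((4*k+5)^2+1) * (N:ℝ)⁻¹ := by positivity
        calc (KO:ℝ) * Kf * (2^((4*k+5)^2+1) * (N:ℝ)⁻¹)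
            ≤ ((KO:ℝ)+1) * (Kf+1) * (2^((4*k+5)^2+1) * (N:ℝ)⁻¹) :=
              mul_le_mul_of_nonneg_right h9 h10
          _ = ((KO:ℝ)+1) * (Kf+1) * 2^((4*k+5)^2+1) * (N:ℝ)⁻¹ := by ring
end

section
/- Let 0 < c ≤ C < ∞, K ≥ 1 and ω > 0. There exist ε₀ > 0 and C₀ > 0, depending only on c, C, K, ω, such that the following holds. Let μ be a Borel probability measure on ℝ supported in [c, C], let z ∈ ℂ with Im z > 0 and |z| ≤ K, let T₀ ∈ ℂ with Im T₀ ≥ ω satisfy T₀ = −∫ (T₀·x + z)^{−1} dμ(x), and let T ∈ ℂ and 𝓔 ∈ ℂ satisfy T·x + z ≠ 0 for all x ∈ [c, C] and T = −∫ (T·x + z)^{−1} dμ(x) + 𝓔. If |𝓔| ≤ ε₀ and |T − T₀| ≤ ε₀, then |T − T₀| ≤ C₀ |𝓔|. -/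
open MeasureTheory Complex Filter ProbabilityTheory Matrix
open scoped ENNReal NNReal ComplexOrder

/-!
With `d = T₀ x + z` and `e = T x + z`, subtracting the two self-consistent equations and using
`d⁻¹ - e⁻¹ = (e - d) / (d e)` gives `(T - T₀) (1 - S) = ℰ` with `S = ∫ x / (d e) dμ`. For `T`
close to `T₀`, `S` is close to `S₀ = ∫ x / d² dμ`, so it suffices to bound `1 - Re S₀` from below.
Taking imaginary parts in the equation for `T₀` gives `∫ x / |d|² dμ ≤ 1`. Moreover
`Im d ≥ c ω` while `|d| ≤ C / (c ω) + K`, so `d` lies in a sector `s |d| ≤ Im d` about the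
imaginary axis, where `Re d⁻² ≤ (1 - 2 s²) / |d|²`; hence `1 - Re S₀ ≥ min 1 (2 s²)`.
-/

lemma norm_integral_le_of_ae_norm_le {α E : Type*} [MeasurableSpace α] [NormedAddCommGroup E]
    [NormedSpace ℝ E] {μ : Measure α} [IsProbabilityMeasure μ] {f : α → E} {B : ℝ}
    (h : ∀ᵐ x ∂μ, ‖f x‖ ≤ B) : ‖∫ x, f x ∂μ‖ ≤ B := by
  simpa using norm_integral_le_of_norm_le_const h

namespace Complex

lemma re_inv_sq_le_of_mul_norm_le_im {d : ℂ} {s : ℝ} (hs : 0 ≤ s) (h : s * ‖d‖ ≤ d.im) :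
    (d⁻¹ ^ 2).re ≤ (1 - 2 * s ^ 2) / normSq d := by
  rcases eq_or_ne d 0 with rfl | hd
  · simp
  have hn : 0 < normSq d := normSq_pos.mpr hd
  have hsq : s ^ 2 * normSq d ≤ d.im ^ 2 := by
    rw [normSq_eq_norm_sq, ← mul_pow]
    exact pow_le_pow_left₀ (by positivity) h 2
  have hre : (d⁻¹ ^ 2).re = (normSq d - 2 * d.im ^ 2) / normSq d ^ 2 := by
    rw [inv_pow, inv_re, map_pow, sq d, mul_re, normSq_apply]
    ring
  rw [hre, div_le_div_iff₀ (by positivity) hn]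
  nlinarith

end Complex

open Complex

section SelfConsistentEquation

variable {μ : Measure ℝ}

lemma integral_div_normSq_le_one {z T₀ : ℂ} (hz : 0 ≤ z.im) (hT₀ : 0 < T₀.im)
    (hpos : ∀ᵐ x ∂μ, 0 ≤ x) (hint : Integrable (fun x : ℝ => (T₀ * x + z)⁻¹) μ)
    (hT₀eq : T₀ = -∫ x, (T₀ * x + z)⁻¹ ∂μ) :
    ∫ x, x / normSq (T₀ * x + z) ∂μ ≤ 1 := by
  have him : ∫ x, -((T₀ * x + z)⁻¹).im ∂μ = T₀.im := by
    conv_rhs => rw [hT₀eq]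
    rw [integral_neg, neg_im, ← RCLike.im_to_complex, ← integral_im hint]
    rfl
  -- `Im T₀ = ∫ (Im T₀ x + Im z) / |T₀ x + z|² ≥ Im T₀ ∫ x / |T₀ x + z|²`
  have hmono : T₀.im * ∫ x, x / normSq (T₀ * x + z) ∂μ ≤ T₀.im * 1 := by
    rw [mul_one, ← integral_const_mul]
    refine (integral_mono_of_nonneg ?_ hint.im.neg ?_).trans him.le
    · filter_upwards [hpos] with x hx
      exact mul_nonneg hT₀.le (div_nonneg hx (normSq_nonneg _))
    · filter_upwards [hpos] with x hx
      have hdim : (T₀ * x + z).im = T₀.im * x + z.im := by simp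
      rw [Pi.neg_apply, RCLike.im_to_complex, inv_im, neg_div, neg_neg, hdim, mul_div_assoc']
      exact div_le_div_of_nonneg_right (by linarith) (normSq_nonneg _)
  exact le_of_mul_le_mul_left hmono hT₀

lemma min_le_one_sub_re_integral {s : ℝ} {z T₀ : ℂ} (hs : 0 ≤ s) (hz : 0 ≤ z.im)
    (hT₀ : 0 < T₀.im) (hpos : ∀ᵐ x ∂μ, 0 ≤ x)
    (hsd : ∀ᵐ x : ℝ ∂μ, s * ‖T₀ * x + z‖ ≤ (T₀ * x + z).im)
    (hint : Integrable (fun x : ℝ => (T₀ * x + z)⁻¹) μ)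
    (hint₂ : Integrable (fun x : ℝ => x * (T₀ * x + z)⁻¹ ^ 2) μ)
    (hT₀eq : T₀ = -∫ x, (T₀ * x + z)⁻¹ ∂μ) :
    min 1 (2 * s ^ 2) ≤ 1 - (∫ x, x * (T₀ * x + z)⁻¹ ^ 2 ∂μ).re := by
  set I := ∫ x, x / normSq (T₀ * x + z) ∂μ
  have hI₀ : 0 ≤ I := integral_nonneg_of_ae <| by
    filter_upwards [hpos] with x hx
    exact div_nonneg hx (normSq_nonneg _)
  have hI₁ : I ≤ 1 := integral_div_normSq_le_one hz hT₀ hpos hint hT₀eq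
  have hnorm : (fun x : ℝ => ‖(x : ℂ) * (T₀ * x + z)⁻¹ ^ 2‖) =ᵐ[μ]
      fun x => x / normSq (T₀ * x + z) := by
    filter_upwards [hpos] with x hx
    rw [norm_mul, norm_pow, norm_inv, norm_real, Real.norm_of_nonneg hx, normSq_eq_norm_sq,
      inv_pow, div_eq_mul_inv]
  have hre : (∫ x, x * (T₀ * x + z)⁻¹ ^ 2 ∂μ).re ≤ (1 - 2 * s ^ 2) * I := by
    rw [← RCLike.re_to_complex, ← integral_re hint₂, ← integral_const_mul]
    refine integral_mono_ae hint₂.re ((hint₂.norm.congr hnorm).const_mul _) ?_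
    filter_upwards [hpos, hsd] with x hx hsx
    calc (RCLike.re ((x : ℂ) * (T₀ * x + z)⁻¹ ^ 2))
        = x * ((T₀ * x + z)⁻¹ ^ 2).re := re_ofReal_mul _ _
      _ ≤ x * ((1 - 2 * s ^ 2) / normSq (T₀ * x + z)) :=
        mul_le_mul_of_nonneg_left (re_inv_sq_le_of_mul_norm_le_im hs hsx) hx
      _ = (1 - 2 * s ^ 2) * (x / normSq (T₀ * x + z)) := by ring
  -- `1 - (1 - 2 s²) I` is affine in `I ∈ [0, 1]`, with values `1` and `2 s²` at the ends
  nlinarith [mul_le_mul_of_nonneg_left (min_le_left 1 (2 * s ^ 2)) (sub_nonneg.2 hI₁),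
    mul_le_mul_of_nonneg_left (min_le_right 1 (2 * s ^ 2)) hI₀]

lemma sub_mul_one_sub_integral_eq {z T₀ T ℰ : ℂ}
    (hd : ∀ᵐ x : ℝ ∂μ, T₀ * x + z ≠ 0) (he : ∀ᵐ x : ℝ ∂μ, T * x + z ≠ 0)
    (hid : Integrable (fun x : ℝ => (T₀ * x + z)⁻¹) μ)
    (hie : Integrable (fun x : ℝ => (T * x + z)⁻¹) μ)
    (hT₀eq : T₀ = -∫ x, (T₀ * x + z)⁻¹ ∂μ) (hTeq : T = (-∫ x, (T * x + z)⁻¹ ∂μ) + ℰ) :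
    (T - T₀) * (1 - ∫ x, x * ((T₀ * x + z)⁻¹ * (T * x + z)⁻¹) ∂μ) = ℰ := by
  have hres : ∫ x, (T₀ * x + z)⁻¹ ∂μ - ∫ x, (T * x + z)⁻¹ ∂μ =
      (T - T₀) * ∫ x, x * ((T₀ * x + z)⁻¹ * (T * x + z)⁻¹) ∂μ := by
    rw [← integral_sub hid hie, ← integral_const_mul]
    refine integral_congr_ae ?_
    filter_upwards [hd, he] with x hdx hex
    rw [inv_sub_inv hdx hex, div_eq_mul_inv, mul_inv]
    ring
  linear_combination hTeq - hT₀eq + hres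

lemma norm_mul_inv_mul_inv_sub_mul_inv_sq_le {d e u : ℂ} {x p C : ℝ} (hp : 0 < p)
    (hx : 0 ≤ x) (hxC : x ≤ C) (hde : e - d = u * x) (hd : p ≤ ‖d‖) (he : p / 2 ≤ ‖e‖) :
    ‖x * (d⁻¹ * e⁻¹) - x * d⁻¹ ^ 2‖ ≤ 2 * C ^ 2 / p ^ 3 * ‖u‖ := by
  have hd₀ : d ≠ 0 := norm_pos_iff.mp (hp.trans_le hd)
  have he₀ : e ≠ 0 := norm_pos_iff.mp ((half_pos hp).trans_le he)
  have hid : x * (d⁻¹ * e⁻¹) - x * d⁻¹ ^ 2 = -(u * x ^ 2 * d⁻¹ ^ 2 * e⁻¹) := by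
    have hres : e⁻¹ - d⁻¹ = e⁻¹ * -(u * x) * d⁻¹ := by
      rw [inv_sub_inv' he₀ hd₀, ← hde, neg_sub]
    linear_combination x * d⁻¹ * hres
  rw [hid, norm_neg, norm_mul, norm_mul, norm_mul, norm_pow, norm_pow, norm_real,
    Real.norm_of_nonneg hx, norm_inv, norm_inv]
  calc ‖u‖ * x ^ 2 * ‖d‖⁻¹ ^ 2 * ‖e‖⁻¹ ≤ ‖u‖ * C ^ 2 * p⁻¹ ^ 2 * (p / 2)⁻¹ := by gcongr
    _ = 2 * C ^ 2 / p ^ 3 * ‖u‖ := by field_simp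

lemma half_le_norm_mul_ofReal_add {p x C : ℝ} {z T₀ T : ℂ} (hx : 0 ≤ x) (hxC : x ≤ C)
    (hd : p ≤ ‖T₀ * x + z‖) (hclose : ‖T - T₀‖ * C ≤ p / 2) : p / 2 ≤ ‖T * x + z‖ := by
  have hshift : ‖(T - T₀) * x‖ ≤ p / 2 := by
    rw [norm_mul, norm_real, Real.norm_of_nonneg hx]
    exact (mul_le_mul_of_nonneg_left hxC (norm_nonneg _)).trans hclose
  have htri : ‖T₀ * x + z‖ ≤ ‖T * x + z‖ + ‖(T - T₀) * x‖ := by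
    simpa only [show T₀ * x + z = (T * x + z) - (T - T₀) * x by ring] using norm_sub_le _ _
  linarith

theorem norm_sub_mul_sub_le_of_eq_neg_integral_inv [IsProbabilityMeasure μ] {C p s : ℝ}
    (hp : 0 < p) (hs : 0 ≤ s) (hsupp : ∀ᵐ x ∂μ, 0 ≤ x ∧ x ≤ C) {z T₀ T ℰ : ℂ}
    (hz : 0 ≤ z.im) (hT₀ : 0 < T₀.im)
    (hd : ∀ᵐ x : ℝ ∂μ, p ≤ (T₀ * x + z).im ∧ s * ‖T₀ * x + z‖ ≤ (T₀ * x + z).im)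
    (hT₀eq : T₀ = -∫ x, (T₀ * x + z)⁻¹ ∂μ) (hTeq : T = (-∫ x, (T * x + z)⁻¹ ∂μ) + ℰ)
    (hclose : ‖T - T₀‖ * C ≤ p / 2) :
    ‖T - T₀‖ * (min 1 (2 * s ^ 2) - 2 * C ^ 2 / p ^ 3 * ‖T - T₀‖) ≤ ‖ℰ‖ := by
  have hd_norm : ∀ᵐ x : ℝ ∂μ, p ≤ ‖T₀ * x + z‖ := hd.mono fun x hx => hx.1.trans (im_le_norm _)
  have he_norm : ∀ᵐ x : ℝ ∂μ, p / 2 ≤ ‖T * x + z‖ := by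
    filter_upwards [hsupp, hd_norm] with x hx hdx
    exact half_le_norm_mul_ofReal_add hx.1 hx.2 hdx hclose
  have hbd : ∀ᵐ x : ℝ ∂μ, ‖(T₀ * x + z)⁻¹‖ ≤ p⁻¹ :=
    hd_norm.mono fun x hx => by rw [norm_inv]; exact inv_anti₀ hp hx
  have hbe : ∀ᵐ x : ℝ ∂μ, ‖(T * x + z)⁻¹‖ ≤ (p / 2)⁻¹ :=
    he_norm.mono fun x hx => by rw [norm_inv]; exact inv_anti₀ (half_pos hp) hx
  have hbx : ∀ᵐ x : ℝ ∂μ, ‖(x : ℂ)‖ ≤ C :=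
    hsupp.mono fun x hx => by rw [norm_real, Real.norm_of_nonneg hx.1]; exact hx.2
  have hid : Integrable (fun x : ℝ => (T₀ * x + z)⁻¹) μ := .of_bound (by fun_prop) _ hbd
  have hie : Integrable (fun x : ℝ => (T * x + z)⁻¹) μ := .of_bound (by fun_prop) _ hbe
  have hiS : Integrable (fun x : ℝ => x * ((T₀ * x + z)⁻¹ * (T * x + z)⁻¹)) μ :=
    (hid.mul_bdd (by fun_prop) hbe).bdd_mul (by fun_prop) hbx
  have hiS₀ : Integrable (fun x : ℝ => x * (T₀ * x + z)⁻¹ ^ 2) μ := by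
    simpa only [sq] using (hid.mul_bdd (by fun_prop) hbd).bdd_mul (by fun_prop) hbx
  set S := ∫ x, x * ((T₀ * x + z)⁻¹ * (T * x + z)⁻¹) ∂μ
  set S₀ := ∫ x, x * (T₀ * x + z)⁻¹ ^ 2 ∂μ
  have hkey : (T - T₀) * (1 - S) = ℰ :=
    sub_mul_one_sub_integral_eq (hd_norm.mono fun x hx => norm_pos_iff.mp (hp.trans_le hx))
      (he_norm.mono fun x hx => norm_pos_iff.mp ((half_pos hp).trans_le hx)) hid hie hT₀eq hTeq
  have hS₀ : min 1 (2 * s ^ 2) ≤ ‖1 - S₀‖ :=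
    (min_le_one_sub_re_integral hs hz hT₀ (hsupp.mono fun x hx => hx.1)
      (hd.mono fun x hx => hx.2) hid hiS₀ hT₀eq).trans
      (by simpa only [sub_re, one_re] using re_le_norm (1 - S₀))
  have hSS₀ : ‖S - S₀‖ ≤ 2 * C ^ 2 / p ^ 3 * ‖T - T₀‖ := by
    rw [← integral_sub hiS hiS₀]
    refine norm_integral_le_of_ae_norm_le ?_
    filter_upwards [hsupp, hd_norm, he_norm] with x hx hdx hex
    exact norm_mul_inv_mul_inv_sub_mul_inv_sq_le hp hx.1 hx.2 (by ring) hdx hex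
  have h1S : min 1 (2 * s ^ 2) - 2 * C ^ 2 / p ^ 3 * ‖T - T₀‖ ≤ ‖1 - S‖ := by
    have := norm_sub_le_norm_sub_add_norm_sub (1 : ℂ) S S₀
    linarith
  calc _ ≤ ‖T - T₀‖ * ‖1 - S‖ := by gcongr
    _ = ‖ℰ‖ := by rw [← hkey, norm_mul]

lemma norm_le_inv_of_eq_neg_integral_inv [IsProbabilityMeasure μ] {p : ℝ} {z T₀ : ℂ}
    (hp : 0 < p) (hd : ∀ᵐ x : ℝ ∂μ, p ≤ ‖T₀ * x + z‖) (hT₀eq : T₀ = -∫ x, (T₀ * x + z)⁻¹ ∂μ) :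
    ‖T₀‖ ≤ p⁻¹ := by
  rw [hT₀eq, norm_neg]
  exact norm_integral_le_of_ae_norm_le
    (hd.mono fun x hx => by rw [norm_inv]; exact inv_anti₀ hp hx)

lemma mul_le_im_mul_ofReal_add {c ω x : ℝ} {z T : ℂ} (hc : 0 ≤ c) (hω : 0 ≤ ω) (hcx : c ≤ x)
    (hωT : ω ≤ T.im) (hz : 0 ≤ z.im) : c * ω ≤ (T * x + z).im := by
  simp only [add_im, mul_im, ofReal_re, ofReal_im, mul_zero]
  nlinarith [mul_le_mul hωT hcx hc (hω.trans hωT)]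

lemma div_mul_norm_mul_ofReal_add_le_im {c C K ω x : ℝ} {z T : ℂ} (hc : 0 < c) (hω : 0 < ω)
    (hx : x ∈ Set.Icc c C) (hωT : ω ≤ T.im) (hT : ‖T‖ ≤ (c * ω)⁻¹) (hz : 0 ≤ z.im)
    (hzK : ‖z‖ ≤ K) :
    c * ω / ((c * ω)⁻¹ * C + K) * ‖T * x + z‖ ≤ (T * x + z).im := by
  have hx₀ : 0 ≤ x := hc.le.trans hx.1
  have hnorm : ‖T * x + z‖ ≤ (c * ω)⁻¹ * C + K := by
    calc ‖T * x + z‖ ≤ ‖T‖ * x + ‖z‖ := by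
          simpa [Real.norm_of_nonneg hx₀] using norm_add_le (T * x) z
      _ ≤ (c * ω)⁻¹ * C + K := add_le_add (mul_le_mul hT hx.2 hx₀ (by positivity)) hzK
  have him := mul_le_im_mul_ofReal_add hc.le hω.le hx.1 hωT hz
  have hM : 0 < (c * ω)⁻¹ * C + K := by
    have := hc.trans_le (hx.1.trans hx.2)
    have := (norm_nonneg z).trans hzK
    positivity
  rw [div_mul_eq_mul_div, div_le_iff₀ hM]
  exact mul_le_mul him hnorm (norm_nonneg _) ((mul_pos hc hω).le.trans him)

end SelfConsistentEquation

theorem stmt_17 (c C K ω : ℝ) (hc : 0 < c) (hcC : c ≤ C) (hK : 1 ≤ K) (hω : 0 < ω) :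
    ∃ ε₀ C₀ : ℝ, 0 < ε₀ ∧ 0 < C₀ ∧
      ∀ μ : Measure ℝ, IsProbabilityMeasure μ → (∀ᵐ x ∂μ, x ∈ Set.Icc c C) →
      ∀ z : ℂ, 0 < z.im → ‖z‖ ≤ K →
      ∀ T₀ : ℂ, ω ≤ T₀.im → T₀ = -∫ x, (T₀ * (x : ℂ) + z)⁻¹ ∂μ →
      ∀ T ℰ : ℂ, (∀ x ∈ Set.Icc c C, T * (x : ℂ) + z ≠ 0) →
        T = (-∫ x, (T * (x : ℂ) + z)⁻¹ ∂μ) + ℰ →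
        ‖ℰ‖ ≤ ε₀ → ‖T - T₀‖ ≤ ε₀ →
        ‖T - T₀‖ ≤ C₀ * ‖ℰ‖ := by
  have hp : 0 < c * ω := mul_pos hc hω
  have hC : 0 < C := hc.trans_le hcC
  set s := c * ω / ((c * ω)⁻¹ * C + K)
  set δ := min 1 (2 * s ^ 2)
  have hδ : 0 < δ := lt_min one_pos (by positivity)
  refine ⟨min (c * ω / (2 * C)) (δ * (c * ω) ^ 3 / (4 * C ^ 2)), 2 / δ,
    lt_min (by positivity) (by positivity), by positivity, ?_⟩
  intro μ _ hsupp z hz hzK T₀ hT₀im hT₀eq T ℰ _ hTeq _ hclose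
  have him : ∀ᵐ x : ℝ ∂μ, c * ω ≤ (T₀ * x + z).im :=
    hsupp.mono fun x hx => mul_le_im_mul_ofReal_add hc.le hω.le hx.1 hT₀im hz.le
  have hT₀norm : ‖T₀‖ ≤ (c * ω)⁻¹ :=
    norm_le_inv_of_eq_neg_integral_inv hp (him.mono fun x hx => hx.trans (im_le_norm _)) hT₀eq
  have hd : ∀ᵐ x : ℝ ∂μ, c * ω ≤ (T₀ * x + z).im ∧ s * ‖T₀ * x + z‖ ≤ (T₀ * x + z).im :=
    (hsupp.and him).mono fun x hx => ⟨hx.2,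
      div_mul_norm_mul_ofReal_add_le_im hc hω hx.1 hT₀im hT₀norm hz.le hzK⟩
  have hclose₁ : ‖T - T₀‖ * (2 * C) ≤ c * ω :=
    (le_div_iff₀ (by positivity)).1 (hclose.trans (min_le_left _ _))
  have hclose₂ : 2 * C ^ 2 / (c * ω) ^ 3 * ‖T - T₀‖ ≤ δ / 2 := by
    have := (le_div_iff₀ (by positivity)).1 (hclose.trans (min_le_right _ _))
    rw [div_mul_eq_mul_div, div_le_iff₀ (by positivity)]
    linarith
  have hstab := norm_sub_mul_sub_le_of_eq_neg_integral_inv hp (by positivity)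
    (hsupp.mono fun x hx => ⟨hc.le.trans hx.1, hx.2⟩) hz.le (hω.trans_le hT₀im) hd hT₀eq hTeq
    (by linarith)
  rw [div_mul_eq_mul_div, le_div_iff₀ hδ]
  nlinarith [norm_nonneg (T - T₀)]
end
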